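/- arXiv:2012.12107 — 7 statements merged into one kernel-verified Lean document; each statement's English description precedes it below -/
import Mathlib

section
/- Generalized Shearer's Lemma (Remark 1): Let X_1, ..., X_n be discrete random variables taking finitely many values, and let S_1, ..., S_m be finite sets of indices that are NOT necessarily contained in {1, ..., n}, such that every index i in {1, ..., n} belongs to at least k of the sets S_1, ..., S_m (where k ≥ 1). Then k · H(X_1, ..., X_n) ≤ Σ_{j=1}^m H(X_{S_j ∩ {1,...,n}}). -/
open Finset

/-- Shannon entropy (base 2) of a discrete random variable `X` defined on a finite
probability space `Ω` with probability mass function `p`. The convention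
`0 · log₂ 0 = 0` holds automatically since `Real.logb 2 0 = 0`. -/
noncomputable def ent {Ω α : Type*} [Fintype Ω] [Fintype α] [DecidableEq α]
    (p : Ω → ℝ) (X : Ω → α) : ℝ :=
  -∑ a : α, (∑ ω ∈ Finset.univ.filter fun ω => X ω = a, p ω) *
      Real.logb 2 (∑ ω ∈ Finset.univ.filter fun ω => X ω = a, p ω)

namespace ShearerAux

variable {Ω : Type*} [Fintype Ω]

/-- the probability that `X = a` -/
noncomputable def pr {α : Type*} [DecidableEq α] (p : Ω → ℝ) (X : Ω → α) (a : α) : ℝ :=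
  ∑ ω ∈ Finset.univ.filter fun ω => X ω = a, p ω

lemma ent_eq {α : Type*} [Fintype α] [DecidableEq α] (p : Ω → ℝ) (X : Ω → α) :
    ent p X = -∑ a : α, pr p X a * Real.logb 2 (pr p X a) := rfl

lemma pr_nonneg {α : Type*} [DecidableEq α] {p : Ω → ℝ} (hp : ∀ ω, 0 ≤ p ω)
    (X : Ω → α) (a : α) : 0 ≤ pr p X a :=
  Finset.sum_nonneg fun ω _ => hp ω

lemma sum_pr {α : Type*} [Fintype α] [DecidableEq α] (p : Ω → ℝ) (X : Ω → α) :
    ∑ a, pr p X a = ∑ ω, p ω := by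
  simpa [pr] using Finset.sum_fiberwise_eq_sum_filter univ univ X p

lemma pr_congr {α β : Type*} [DecidableEq α] [DecidableEq β] (p : Ω → ℝ)
    {X : Ω → α} {Y : Ω → β} {a : α} {b : β}
    (h : ∀ ω, X ω = a ↔ Y ω = b) : pr p X a = pr p Y b := by
  unfold pr
  congr 1
  ext ω
  simp [h ω]

lemma sum_pr_pair {α β : Type*} [Fintype β] [DecidableEq α] [DecidableEq β]
    (p : Ω → ℝ) (f : Ω → α) (g : Ω → β) (a : α) :
    ∑ b, pr p (fun ω => (f ω, g ω)) (a, b) = pr p f a := by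
  unfold pr
  calc ∑ b, ∑ ω ∈ Finset.univ.filter fun ω => (f ω, g ω) = (a, b), p ω
      = ∑ b ∈ univ, ∑ ω ∈ (univ.filter fun ω => f ω = a).filter fun ω => g ω = b, p ω := by
        refine Finset.sum_congr rfl fun b _ => ?_
        congr 1
        ext ω
        simp [Prod.ext_iff, and_comm]
    _ = ∑ ω ∈ (univ.filter fun ω => f ω = a).filter fun ω => g ω ∈ univ, p ω :=
        Finset.sum_fiberwise_eq_sum_filter _ _ _ _
    _ = ∑ ω ∈ Finset.univ.filter fun ω => f ω = a, p ω := by simp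

lemma pr_pair_le_fst {α β : Type*} [Fintype β] [DecidableEq α] [DecidableEq β]
    {p : Ω → ℝ} (hp : ∀ ω, 0 ≤ p ω) (f : Ω → α) (g : Ω → β) (a : α) (b : β) :
    pr p (fun ω => (f ω, g ω)) (a, b) ≤ pr p f a := by
  rw [← sum_pr_pair p f g a]
  exact Finset.single_le_sum (fun b _ => pr_nonneg hp _ _) (mem_univ b)

lemma mul_logb_le {t s : ℝ} (ht : 0 ≤ t) (hts : t ≤ s) :
    t * Real.logb 2 t ≤ t * Real.logb 2 s := by
  rcases ht.eq_or_lt with h | h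
  · simp [← h]
  · exact mul_le_mul_of_nonneg_left
      (Real.logb_le_logb_of_le one_lt_two h hts) ht

lemma ent_le_ent_pair {α β : Type*} [Fintype α] [Fintype β] [DecidableEq α] [DecidableEq β]
    {p : Ω → ℝ} (hp : ∀ ω, 0 ≤ p ω) (f : Ω → α) (g : Ω → β) :
    ent p f ≤ ent p (fun ω => (f ω, g ω)) := by
  rw [ent_eq, ent_eq, neg_le_neg_iff, Fintype.sum_prod_type]
  refine Finset.sum_le_sum fun a _ => ?_
  calc ∑ b, pr p (fun ω => (f ω, g ω)) (a, b) *
        Real.logb 2 (pr p (fun ω => (f ω, g ω)) (a, b))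
      ≤ ∑ b, pr p (fun ω => (f ω, g ω)) (a, b) * Real.logb 2 (pr p f a) :=
        Finset.sum_le_sum fun b _ =>
          mul_logb_le (pr_nonneg hp _ _) (pr_pair_le_fst hp f g a b)
    _ = pr p f a * Real.logb 2 (pr p f a) := by rw [← Finset.sum_mul, sum_pr_pair]

lemma ent_comp_inj {α β : Type*} [Fintype α] [Fintype β] [DecidableEq α] [DecidableEq β]
    (p : Ω → ℝ) (X : Ω → α) {φ : α → β} (hφ : Function.Injective φ) :
    ent p (fun ω => φ (X ω)) = ent p X := by
  rw [ent_eq, ent_eq, neg_inj]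
  have h0 : ∀ b ∈ (univ : Finset β), b ∉ Finset.image φ univ →
      pr p (fun ω => φ (X ω)) b * Real.logb 2 (pr p (fun ω => φ (X ω)) b) = 0 := by
    intro b _ hb
    have : pr p (fun ω => φ (X ω)) b = 0 := by
      refine Finset.sum_eq_zero fun ω hω => ?_
      exact absurd (Finset.mem_image.mpr ⟨X ω, mem_univ _, (Finset.mem_filter.mp hω).2⟩) hb
    rw [this]
    simp
  rw [← Finset.sum_subset (Finset.subset_univ (Finset.image φ univ)) h0,
    Finset.sum_image (fun a _ a' _ h => hφ h)]
  refine Finset.sum_congr rfl fun a _ => ?_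
  rw [pr_congr p (fun ω => hφ.eq_iff)]

lemma ent_comp_le {α β : Type*} [Fintype α] [Fintype β] [DecidableEq α] [DecidableEq β]
    {p : Ω → ℝ} (hp : ∀ ω, 0 ≤ p ω) (X : Ω → α) (ψ : α → β) :
    ent p (fun ω => ψ (X ω)) ≤ ent p X := by
  have h1 : ent p (fun ω => ψ (X ω)) ≤ ent p (fun ω => (ψ (X ω), X ω)) :=
    ent_le_ent_pair hp _ _
  have h2 : ent p (fun ω => (ψ (X ω), X ω)) = ent p X :=
    ent_comp_inj p X (φ := fun x => (ψ x, x)) (fun x y h => congrArg Prod.snd h)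
  linarith

lemma ent_eq_of_maps {α β : Type*} [Fintype α] [Fintype β] [DecidableEq α] [DecidableEq β]
    {p : Ω → ℝ} (hp : ∀ ω, 0 ≤ p ω) {X : Ω → α} {Y : Ω → β} (φ : α → β) (ψ : β → α)
    (hXY : ∀ ω, Y ω = φ (X ω)) (hYX : ∀ ω, X ω = ψ (Y ω)) : ent p X = ent p Y := by
  have e1 : ent p X = ent p (fun ω => ψ (Y ω)) := by rw [funext hYX]
  have e2 : ent p Y = ent p (fun ω => φ (X ω)) := by rw [funext hXY]
  have h1 := ent_comp_le hp Y ψ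
  have h2 := ent_comp_le hp X φ
  linarith

lemma ent_const {α : Type*} [Fintype α] [DecidableEq α]
    {p : Ω → ℝ} (hsum : ∑ ω, p ω = 1) (X : Ω → α) (c : α) (h : ∀ ω, X ω = c) :
    ent p X = 0 := by
  rw [ent_eq]
  have h1 : ∀ a, pr p X a = if a = c then 1 else 0 := by
    intro a
    unfold pr
    split_ifs with hac
    · subst hac
      rw [Finset.filter_true_of_mem (fun ω _ => h ω)]
      exact hsum
    · rw [Finset.filter_false_of_mem, Finset.sum_empty]
      intro ω _
      rw [h ω]
      exact fun hca => hac hca.symm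
  rw [Finset.sum_eq_zero, neg_zero]
  intro a _
  rw [h1 a]
  split_ifs <;> simp

lemma submod_aux {α β γ : Type*} [Fintype α] [Fintype β] [Fintype γ]
    (q3 : α → β → γ → ℝ) (qac : α → γ → ℝ) (qbc : β → γ → ℝ) (qc : γ → ℝ)
    (h3 : ∀ a b c, 0 ≤ q3 a b c)
    (hac : ∀ a c, ∑ b, q3 a b c = qac a c)
    (hbc : ∀ b c, ∑ a, q3 a b c = qbc b c)
    (hcA : ∀ c, ∑ a, qac a c = qc c)
    (hcB : ∀ c, ∑ b, qbc b c = qc c) :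
    ∑ a, ∑ c, qac a c * Real.logb 2 (qac a c) +
      ∑ b, ∑ c, qbc b c * Real.logb 2 (qbc b c) ≤
    (∑ a, ∑ b, ∑ c, q3 a b c * Real.logb 2 (q3 a b c)) +
      ∑ c, qc c * Real.logb 2 (qc c) := by
  have hacn : ∀ a c, 0 ≤ qac a c := fun a c =>
    (hac a c) ▸ Finset.sum_nonneg fun b _ => h3 a b c
  have hbcn : ∀ b c, 0 ≤ qbc b c := fun b c =>
    (hbc b c) ▸ Finset.sum_nonneg fun a _ => h3 a b c
  have hqcn : ∀ c, 0 ≤ qc c := fun c =>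
    (hcA c) ▸ Finset.sum_nonneg fun a _ => hacn a c
  have h3ac : ∀ a b c, q3 a b c ≤ qac a c := fun a b c =>
    (hac a c) ▸ Finset.single_le_sum (fun b _ => h3 a b c) (mem_univ b)
  have h3bc : ∀ a b c, q3 a b c ≤ qbc b c := fun a b c =>
    (hbc b c) ▸ Finset.single_le_sum (fun a _ => h3 a b c) (mem_univ a)
  have haqc : ∀ a c, qac a c ≤ qc c := fun a c =>
    (hcA c) ▸ Finset.single_le_sum (fun a _ => hacn a c) (mem_univ a)
  have h3c : ∀ a b c, q3 a b c ≤ qc c := fun a b c => (h3ac a b c).trans (haqc a c)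
  have hlog2 : (0:ℝ) < Real.log 2 := Real.log_pos one_lt_two
  suffices key : ∑ a, ∑ b, ∑ c,
      (q3 a b c * Real.logb 2 (qac a c) + q3 a b c * Real.logb 2 (qbc b c)
        - q3 a b c * Real.logb 2 (q3 a b c) - q3 a b c * Real.logb 2 (qc c)) ≤ 0 by
    have e1 : ∑ a, ∑ b, ∑ c, q3 a b c * Real.logb 2 (qac a c)
        = ∑ a, ∑ c, qac a c * Real.logb 2 (qac a c) := by
      refine Finset.sum_congr rfl fun a _ => ?_
      rw [Finset.sum_comm]
      exact Finset.sum_congr rfl fun c _ => by rw [← Finset.sum_mul, hac]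
    have e2 : ∑ a, ∑ b, ∑ c, q3 a b c * Real.logb 2 (qbc b c)
        = ∑ b, ∑ c, qbc b c * Real.logb 2 (qbc b c) := by
      rw [Finset.sum_comm]
      refine Finset.sum_congr rfl fun b _ => ?_
      rw [Finset.sum_comm]
      exact Finset.sum_congr rfl fun c _ => by rw [← Finset.sum_mul, hbc]
    have e4 : ∑ a, ∑ b, ∑ c, q3 a b c * Real.logb 2 (qc c)
        = ∑ c, qc c * Real.logb 2 (qc c) := by
      have estep : ∀ a, ∑ b, ∑ c, q3 a b c * Real.logb 2 (qc c)
          = ∑ c, qac a c * Real.logb 2 (qc c) := fun a => by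
        rw [Finset.sum_comm]
        exact Finset.sum_congr rfl fun c _ => by rw [← Finset.sum_mul, hac]
      rw [Finset.sum_congr rfl fun a _ => estep a, Finset.sum_comm]
      exact Finset.sum_congr rfl fun c _ => by rw [← Finset.sum_mul, hcA]
    simp only [Finset.sum_sub_distrib, Finset.sum_add_distrib] at key
    rw [e1, e2, e4] at key
    linarith
  have bound : ∀ a b c,
      q3 a b c * Real.logb 2 (qac a c) + q3 a b c * Real.logb 2 (qbc b c)
        - q3 a b c * Real.logb 2 (q3 a b c) - q3 a b c * Real.logb 2 (qc c)
      ≤ (if 0 < q3 a b c then qac a c * qbc b c / qc c else 0) / Real.log 2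
          - q3 a b c / Real.log 2 := by
    intro a b c
    rcases (h3 a b c).eq_or_lt with h0 | h0
    · simp [← h0]
    · have hqc : 0 < qc c := lt_of_lt_of_le h0 (h3c a b c)
      have hqac : 0 < qac a c := lt_of_lt_of_le h0 (h3ac a b c)
      have hqbc : 0 < qbc b c := lt_of_lt_of_le h0 (h3bc a b c)
      rw [if_pos h0]
      have hlog : Real.log (qac a c) + Real.log (qbc b c) - Real.log (q3 a b c)
            - Real.log (qc c)
          = Real.log (qac a c * qbc b c / (q3 a b c * qc c)) := by
        rw [Real.log_div (by positivity) (by positivity),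
          Real.log_mul hqac.ne' hqbc.ne', Real.log_mul h0.ne' hqc.ne']
        ring
      have hle : Real.log (qac a c * qbc b c / (q3 a b c * qc c))
          ≤ qac a c * qbc b c / (q3 a b c * qc c) - 1 :=
        Real.log_le_sub_one_of_pos (by positivity)
      have hmul := mul_le_mul_of_nonneg_left hle (h3 a b c)
      have heq : q3 a b c * (qac a c * qbc b c / (q3 a b c * qc c) - 1)
          = qac a c * qbc b c / qc c - q3 a b c := by
        field_simp
      have hfin : q3 a b c * (Real.log (qac a c) + Real.log (qbc b c)
            - Real.log (q3 a b c) - Real.log (qc c))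
          ≤ qac a c * qbc b c / qc c - q3 a b c := by
        rw [hlog]
        linarith
      calc q3 a b c * Real.logb 2 (qac a c) + q3 a b c * Real.logb 2 (qbc b c)
            - q3 a b c * Real.logb 2 (q3 a b c) - q3 a b c * Real.logb 2 (qc c)
          = q3 a b c * (Real.log (qac a c) + Real.log (qbc b c)
              - Real.log (q3 a b c) - Real.log (qc c)) / Real.log 2 := by
            simp only [Real.logb]
            ring
        _ ≤ (qac a c * qbc b c / qc c - q3 a b c) / Real.log 2 :=
            (div_le_div_iff_of_pos_right hlog2).mpr hfin
        _ = qac a c * qbc b c / qc c / Real.log 2 - q3 a b c / Real.log 2 := by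
            ring
  have eQ : ∑ a, ∑ b, ∑ c, q3 a b c = ∑ c, qc c := by
    have estep : ∀ a, ∑ b, ∑ c, q3 a b c = ∑ c, qac a c := fun a => by
      rw [Finset.sum_comm]
      exact Finset.sum_congr rfl fun c _ => hac a c
    rw [Finset.sum_congr rfl fun a _ => estep a, Finset.sum_comm]
    exact Finset.sum_congr rfl fun c _ => hcA c
  have hIte : ∑ a, ∑ b, ∑ c, (if 0 < q3 a b c then qac a c * qbc b c / qc c else 0)
      ≤ ∑ c, qc c := by
    have step1 : ∑ a, ∑ b, ∑ c, (if 0 < q3 a b c then qac a c * qbc b c / qc c else 0)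
        ≤ ∑ a, ∑ b, ∑ c, (if 0 < qc c then qac a c * qbc b c / qc c else 0) := by
      refine Finset.sum_le_sum fun a _ => Finset.sum_le_sum fun b _ =>
        Finset.sum_le_sum fun c _ => ?_
      split_ifs with h1 h2
      · exact le_rfl
      · exact absurd (lt_of_lt_of_le h1 (h3c a b c)) h2
      · have := hacn a c
        have := hbcn b c
        positivity
      · exact le_rfl
    have swap : ∑ a, ∑ b, ∑ c, (if 0 < qc c then qac a c * qbc b c / qc c else 0)
        = ∑ c, ∑ a, ∑ b, (if 0 < qc c then qac a c * qbc b c / qc c else 0) := by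
      rw [show (∑ a, ∑ b, ∑ c, (if 0 < qc c then qac a c * qbc b c / qc c else 0))
          = ∑ a, ∑ c, ∑ b, (if 0 < qc c then qac a c * qbc b c / qc c else 0) from
        Finset.sum_congr rfl fun a _ => Finset.sum_comm]
      exact Finset.sum_comm
    have step2 : ∀ c, ∑ a, ∑ b, (if 0 < qc c then qac a c * qbc b c / qc c else 0)
        = if 0 < qc c then qc c else 0 := by
      intro c
      split_ifs with h
      · have inner : ∀ a, ∑ b, qac a c * qbc b c / qc c = qac a c := by
          intro a
          rw [← Finset.sum_div, ← Finset.mul_sum, hcB c, mul_div_assoc,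
            div_self h.ne', mul_one]
        rw [Finset.sum_congr rfl fun a _ => inner a, hcA c]
      · simp
    have step3 : ∑ c, (if 0 < qc c then qc c else 0) ≤ ∑ c, qc c := by
      refine Finset.sum_le_sum fun c _ => ?_
      split_ifs
      · exact le_rfl
      · exact hqcn c
    calc ∑ a, ∑ b, ∑ c, (if 0 < q3 a b c then qac a c * qbc b c / qc c else 0)
        ≤ ∑ a, ∑ b, ∑ c, (if 0 < qc c then qac a c * qbc b c / qc c else 0) := step1
      _ = ∑ c, (if 0 < qc c then qc c else 0) := by
          rw [swap]
          exact Finset.sum_congr rfl fun c _ => step2 c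
      _ ≤ ∑ c, qc c := step3
  calc ∑ a, ∑ b, ∑ c,
      (q3 a b c * Real.logb 2 (qac a c) + q3 a b c * Real.logb 2 (qbc b c)
        - q3 a b c * Real.logb 2 (q3 a b c) - q3 a b c * Real.logb 2 (qc c))
      ≤ ∑ a, ∑ b, ∑ c,
        ((if 0 < q3 a b c then qac a c * qbc b c / qc c else 0) / Real.log 2
          - q3 a b c / Real.log 2) :=
        Finset.sum_le_sum fun a _ => Finset.sum_le_sum fun b _ =>
          Finset.sum_le_sum fun c _ => bound a b c
    _ ≤ 0 := by
        simp only [Finset.sum_sub_distrib, ← Finset.sum_div]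
        rw [eQ]
        have := hIte
        have h2 : (∑ a, ∑ b, ∑ c, (if 0 < q3 a b c then qac a c * qbc b c / qc c else 0))
            / Real.log 2 ≤ (∑ c, qc c) / Real.log 2 := (div_le_div_iff_of_pos_right hlog2).mpr hIte
        linarith

lemma ent_submodular {α β γ : Type*} [Fintype α] [Fintype β] [Fintype γ]
    [DecidableEq α] [DecidableEq β] [DecidableEq γ]
    {p : Ω → ℝ} (hp : ∀ ω, 0 ≤ p ω) (f : Ω → α) (g : Ω → β) (h : Ω → γ) :
    ent p (fun ω => (f ω, g ω, h ω)) + ent p h ≤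
      ent p (fun ω => (f ω, h ω)) + ent p (fun ω => (g ω, h ω)) := by
  have hac : ∀ (a : α) (c : γ), ∑ b, pr p (fun ω => (f ω, g ω, h ω)) (a, b, c)
      = pr p (fun ω => (f ω, h ω)) (a, c) := by
    intro a c
    have e : ∀ b : β, pr p (fun ω => (f ω, g ω, h ω)) (a, b, c)
        = pr p (fun ω => ((f ω, h ω), g ω)) ((a, c), b) := fun b =>
      pr_congr p fun ω => by
        simp only [Prod.mk.injEq]
        tauto
    rw [Finset.sum_congr rfl fun b _ => e b, sum_pr_pair]
  have hbc : ∀ (b : β) (c : γ), ∑ a, pr p (fun ω => (f ω, g ω, h ω)) (a, b, c)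
      = pr p (fun ω => (g ω, h ω)) (b, c) := by
    intro b c
    have e : ∀ a : α, pr p (fun ω => (f ω, g ω, h ω)) (a, b, c)
        = pr p (fun ω => ((g ω, h ω), f ω)) ((b, c), a) := fun a =>
      pr_congr p fun ω => by
        simp only [Prod.mk.injEq]
        tauto
    rw [Finset.sum_congr rfl fun a _ => e a, sum_pr_pair]
  have hcA : ∀ c : γ, ∑ a, pr p (fun ω => (f ω, h ω)) (a, c) = pr p h c := by
    intro c
    have e : ∀ a : α, pr p (fun ω => (f ω, h ω)) (a, c)
        = pr p (fun ω => (h ω, f ω)) (c, a) := fun a =>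
      pr_congr p fun ω => by
        simp only [Prod.mk.injEq]
        tauto
    rw [Finset.sum_congr rfl fun a _ => e a, sum_pr_pair]
  have hcB : ∀ c : γ, ∑ b, pr p (fun ω => (g ω, h ω)) (b, c) = pr p h c := by
    intro c
    have e : ∀ b : β, pr p (fun ω => (g ω, h ω)) (b, c)
        = pr p (fun ω => (h ω, g ω)) (c, b) := fun b =>
      pr_congr p fun ω => by
        simp only [Prod.mk.injEq]
        tauto
    rw [Finset.sum_congr rfl fun b _ => e b, sum_pr_pair]
  have key := submod_aux (fun a b c => pr p (fun ω => (f ω, g ω, h ω)) (a, b, c))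
      (fun a c => pr p (fun ω => (f ω, h ω)) (a, c))
      (fun b c => pr p (fun ω => (g ω, h ω)) (b, c))
      (fun c => pr p h c)
      (fun a b c => pr_nonneg hp _ _) hac hbc hcA hcB
  rw [ent_eq p (fun ω => (f ω, g ω, h ω)), ent_eq p h,
    ent_eq p (fun ω => (f ω, h ω)), ent_eq p (fun ω => (g ω, h ω))]
  simp only [Fintype.sum_prod_type] at key ⊢
  linarith

section ET

variable {n : ℕ} {α : Fin n → Type*} [∀ i, Fintype (α i)] [∀ i, DecidableEq (α i)]

/-- entropy of the collection of random variables indexed by `T` -/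
noncomputable def eT (p : Ω → ℝ) (X : (i : Fin n) → Ω → α i) (T : Finset (Fin n)) : ℝ :=
  ent p (fun ω (i : {i : Fin n // i ∈ T}) => X i.1 ω)

variable {p : Ω → ℝ} {X : (i : Fin n) → Ω → α i}

lemma eT_mono (hp : ∀ ω, 0 ≤ p ω) {T U : Finset (Fin n)} (hTU : T ⊆ U) :
    eT p X T ≤ eT p X U :=
  ent_comp_le hp (fun ω (i : {i : Fin n // i ∈ U}) => X i.1 ω)
    (fun x (i : {i : Fin n // i ∈ T}) => x ⟨i.1, hTU i.2⟩)

lemma eT_empty (hsum : ∑ ω, p ω = 1) : eT p X ∅ = 0 :=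
  ent_const hsum _ (fun i => absurd i.2 (Finset.notMem_empty _))
    (fun ω => funext fun i => absurd i.2 (Finset.notMem_empty _))

lemma eT_submod (hp : ∀ ω, 0 ≤ p ω) (T U : Finset (Fin n)) :
    eT p X (T ∪ U) + eT p X (T ∩ U) ≤ eT p X T + eT p X U := by
  have main := ent_submodular hp
    (fun ω (i : {i : Fin n // i ∈ T}) => X i.1 ω)
    (fun ω (i : {i : Fin n // i ∈ U}) => X i.1 ω)
    (fun ω (i : {i : Fin n // i ∈ T ∩ U}) => X i.1 ω)
  have e1 : eT p X (T ∪ U) = ent p (fun ω =>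
      ((fun (i : {i : Fin n // i ∈ T}) => X i.1 ω),
        (fun (i : {i : Fin n // i ∈ U}) => X i.1 ω),
        (fun (i : {i : Fin n // i ∈ T ∩ U}) => X i.1 ω))) := by
    refine ent_eq_of_maps hp
      (fun x => ((fun i => x ⟨i.1, Finset.mem_union_left U i.2⟩),
        (fun i => x ⟨i.1, Finset.mem_union_right T i.2⟩),
        (fun i => x ⟨i.1, Finset.mem_union_left U (Finset.mem_inter.mp i.2).1⟩)))
      (fun y (i : {i : Fin n // i ∈ T ∪ U}) =>
        if hi : i.1 ∈ T then y.1 ⟨i.1, hi⟩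
        else y.2.1 ⟨i.1, (Finset.mem_union.mp i.2).resolve_left hi⟩)
      (fun ω => rfl) (fun ω => funext fun i => ?_)
    dsimp only
    split
    · rfl
    · rfl
  have e3 : eT p X T = ent p (fun ω =>
      ((fun (i : {i : Fin n // i ∈ T}) => X i.1 ω),
        (fun (i : {i : Fin n // i ∈ T ∩ U}) => X i.1 ω))) :=
    ent_eq_of_maps hp
      (fun x => (x, fun i => x ⟨i.1, (Finset.mem_inter.mp i.2).1⟩))
      Prod.fst (fun ω => rfl) (fun ω => rfl)
  have e4 : eT p X U = ent p (fun ω =>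
      ((fun (i : {i : Fin n // i ∈ U}) => X i.1 ω),
        (fun (i : {i : Fin n // i ∈ T ∩ U}) => X i.1 ω))) :=
    ent_eq_of_maps hp
      (fun x => (x, fun i => x ⟨i.1, (Finset.mem_inter.mp i.2).2⟩))
      Prod.fst (fun ω => rfl) (fun ω => rfl)
  rw [e1, e3, e4]
  exact main

end ET

/-- Abstract combinatorial form of Shearer's lemma, for any monotone submodular
set function vanishing on the empty set. -/
lemma shearer_combinatorial {n m : ℕ} (e : Finset (Fin n) → ℝ)
    (hempty : e ∅ = 0)
    (hmono : ∀ {T U : Finset (Fin n)}, T ⊆ U → e T ≤ e U)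
    (hsub : ∀ T U : Finset (Fin n), e (T ∪ U) + e (T ∩ U) ≤ e T + e U)
    (S : Fin m → Finset ℕ) (k : ℕ)
    (hcov : ∀ i : Fin n, k ≤ (Finset.univ.filter fun j => (i : ℕ) ∈ S j).card) :
    (k : ℝ) * e univ ≤ ∑ j : Fin m, e (univ.filter fun i : Fin n => (i : ℕ) ∈ S j) := by
  classical
  set T : Fin m → Finset (Fin n) := fun j => univ.filter fun i : Fin n => (i : ℕ) ∈ S j
    with hTdef
  set E : ℕ → Finset (Fin n) := fun t => univ.filter fun i : Fin n => (i : ℕ) < t with hEdef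
  have hEn : E n = univ := Finset.filter_true_of_mem fun i _ => i.2
  have hE0 : E 0 = ∅ := Finset.filter_false_of_mem fun i _ => Nat.not_lt_zero _
  have hmonoE : ∀ t, E t ⊆ E (t + 1) := by
    intro t x hx
    simp only [hEdef, Finset.mem_filter] at hx ⊢
    exact ⟨hx.1, Nat.lt_succ_of_lt hx.2⟩
  have htel : ∀ j, e (T j) = ∑ t ∈ Finset.range n, (e (T j ∩ E (t + 1)) - e (T j ∩ E t)) := by
    intro j
    have h := Finset.sum_range_sub (fun t => e (T j ∩ E t)) n
    rw [hE0, hEn, Finset.inter_empty, Finset.inter_univ, hempty, sub_zero] at h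
    exact h.symm
  have hterm : ∀ j, ∀ t ∈ Finset.range n,
      (if t ∈ S j then e (E (t + 1)) - e (E t) else 0) ≤ e (T j ∩ E (t + 1)) - e (T j ∩ E t) := by
    intro j t ht
    have htn : t < n := Finset.mem_range.mp ht
    by_cases hts : t ∈ S j
    · rw [if_pos hts]
      have hsub' := hsub (T j ∩ E (t + 1)) (E t)
      have hU : (T j ∩ E (t + 1)) ∪ E t = E (t + 1) := by
        ext x
        simp only [hTdef, hEdef, Finset.mem_union, Finset.mem_inter, Finset.mem_filter,
          Finset.mem_univ, true_and]
        constructor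
        · rintro (⟨_, h2⟩ | h2)
          · exact h2
          · exact Nat.lt_succ_of_lt h2
        · intro hx
          by_cases hlt : (x : ℕ) < t
          · exact Or.inr hlt
          · have hxt : (x : ℕ) = t := by omega
            exact Or.inl ⟨by rw [hxt]; exact hts, hx⟩
      have hI : (T j ∩ E (t + 1)) ∩ E t = T j ∩ E t := by
        ext x
        simp only [hTdef, hEdef, Finset.mem_inter, Finset.mem_filter, Finset.mem_univ, true_and]
        constructor
        · rintro ⟨⟨h1, _⟩, h2⟩
          exact ⟨h1, h2⟩
        · rintro ⟨h1, h2⟩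
          exact ⟨⟨h1, by omega⟩, h2⟩
      rw [hU, hI] at hsub'
      linarith
    · rw [if_neg hts]
      have heqT : T j ∩ E (t + 1) = T j ∩ E t := by
        ext x
        simp only [hTdef, hEdef, Finset.mem_inter, Finset.mem_filter, Finset.mem_univ, true_and]
        constructor
        · rintro ⟨h1, h2⟩
          refine ⟨h1, ?_⟩
          rcases Nat.lt_succ_iff_lt_or_eq.mp h2 with h | h
          · exact h
          · exact absurd (h ▸ h1) hts
        · rintro ⟨h1, h2⟩
          exact ⟨h1, by omega⟩
      rw [heqT, sub_self]
  have hdnn : ∀ t, (0 : ℝ) ≤ e (E (t + 1)) - e (E t) := fun t =>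
    sub_nonneg.mpr (hmono (hmonoE t))
  calc (k : ℝ) * e univ
      = (k : ℝ) * ∑ t ∈ Finset.range n, (e (E (t + 1)) - e (E t)) := by
        rw [Finset.sum_range_sub (fun t => e (E t)) n, hE0, hEn, hempty, sub_zero]
    _ = ∑ t ∈ Finset.range n, (k : ℝ) * (e (E (t + 1)) - e (E t)) := Finset.mul_sum _ _ _
    _ ≤ ∑ t ∈ Finset.range n,
          ((univ.filter fun j : Fin m => t ∈ S j).card : ℝ) * (e (E (t + 1)) - e (E t)) := by
        refine Finset.sum_le_sum fun t ht => ?_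
        refine mul_le_mul_of_nonneg_right (Nat.cast_le.mpr ?_) (hdnn t)
        simpa using hcov ⟨t, Finset.mem_range.mp ht⟩
    _ = ∑ t ∈ Finset.range n, ∑ j : Fin m,
          (if t ∈ S j then e (E (t + 1)) - e (E t) else 0) := by
        refine Finset.sum_congr rfl fun t _ => ?_
        rw [← Finset.sum_filter, Finset.sum_const, nsmul_eq_mul]
    _ = ∑ j : Fin m, ∑ t ∈ Finset.range n,
          (if t ∈ S j then e (E (t + 1)) - e (E t) else 0) := Finset.sum_comm
    _ ≤ ∑ j : Fin m, ∑ t ∈ Finset.range n, (e (T j ∩ E (t + 1)) - e (T j ∩ E t)) :=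
        Finset.sum_le_sum fun j _ => Finset.sum_le_sum (hterm j)
    _ = ∑ j : Fin m, e (T j) := Finset.sum_congr rfl fun j _ => (htel j).symm

end ShearerAux

/-- **Generalized Shearer's Lemma.** The index sets `S 1, …, S m` are finite sets of
natural numbers, not necessarily contained in `{1, …, n}` (identified with `Fin n`).
If every index `i ∈ {1, …, n}` belongs to at least `k ≥ 1` of the sets `S j`, then
`k · H(X₁, …, Xₙ) ≤ ∑ⱼ H(X_{S j ∩ {1, …, n}})`. -/
theorem generalized_shearer_lemma {Ω : Type*} [Fintype Ω] {n m : ℕ} {α : Fin n → Type*}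
    [∀ i, Fintype (α i)] [∀ i, DecidableEq (α i)]
    (p : Ω → ℝ) (hp : ∀ ω, 0 ≤ p ω) (hsum : ∑ ω, p ω = 1)
    (X : (i : Fin n) → Ω → α i)
    (S : Fin m → Finset ℕ) (k : ℕ) (hk : 1 ≤ k)
    (hcov : ∀ i : Fin n, k ≤ (Finset.univ.filter fun j => (i : ℕ) ∈ S j).card) :
    (k : ℝ) * ent p (fun ω (i : Fin n) => X i ω) ≤
      ∑ j : Fin m, ent p (fun ω (i : {i : Fin n // (i : ℕ) ∈ S j}) => X i.1 ω) := by
  classical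
  have hL : ent p (fun ω (i : Fin n) => X i ω) = ShearerAux.eT p X univ :=
    ShearerAux.ent_eq_of_maps hp
      (fun x (i : {i : Fin n // i ∈ (univ : Finset (Fin n))}) => x i.1)
      (fun x i => x ⟨i, Finset.mem_univ i⟩) (fun ω => rfl) (fun ω => rfl)
  have hR : ∀ j : Fin m, ent p (fun ω (i : {i : Fin n // (i : ℕ) ∈ S j}) => X i.1 ω)
      = ShearerAux.eT p X (univ.filter fun i : Fin n => (i : ℕ) ∈ S j) := fun j =>
    ShearerAux.ent_eq_of_maps hp
      (fun x (i : {i : Fin n // i ∈ univ.filter fun i : Fin n => (i : ℕ) ∈ S j}) =>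
        x ⟨i.1, (Finset.mem_filter.mp i.2).2⟩)
      (fun x i => x ⟨i.1, Finset.mem_filter.mpr ⟨Finset.mem_univ _, i.2⟩⟩)
      (fun ω => rfl) (fun ω => rfl)
  rw [hL, Finset.sum_congr rfl fun j _ => hR j]
  exact ShearerAux.shearer_combinatorial (ShearerAux.eT p X)
    (ShearerAux.eT_empty hsum)
    (fun h => ShearerAux.eT_mono hp h)
    (ShearerAux.eT_submod hp) S k hcov
end

section
/- Kahn's Theorem: If G is a finite simple bipartite d-regular graph (d ≥ 1) with n vertices, then the number of independent sets of G satisfies |I(G)| ≤ (2^{d+1} − 1)^{n/(2d)}. -/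
open Finset

/-- Generalized Hölder: sum of products bounded by product of L^d norms,
when there are exactly `d` functions. -/
lemma multi_holder {ι κ : Type*} (d : ℕ) (hd : 0 < d) (t : Finset ι) (ht : t.card = d)
    (s : Finset κ) (g : ι → κ → ℝ) (hg : ∀ i ∈ t, ∀ x ∈ s, 0 ≤ g i x) :
    ∑ x ∈ s, ∏ i ∈ t, g i x ≤ ∏ i ∈ t, (∑ x ∈ s, g i x ^ d) ^ ((d : ℝ)⁻¹) := by
  have hd' : (d : ℝ) ≠ 0 := Nat.cast_ne_zero.mpr hd.ne'
  set P : ι → ℝ := fun i => ∑ x ∈ s, g i x ^ d with hP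
  have hPnn : ∀ i ∈ t, 0 ≤ P i := fun i hi =>
    Finset.sum_nonneg fun x hx => pow_nonneg (hg i hi x hx) d
  by_cases hzero : ∃ i ∈ t, P i = 0
  · obtain ⟨i, hit, hPi⟩ := hzero
    have hgz : ∀ x ∈ s, g i x = 0 := by
      intro x hx
      have := (Finset.sum_eq_zero_iff_of_nonneg
        (fun y hy => pow_nonneg (hg i hit y hy) d)).1 hPi x hx
      exact pow_eq_zero_iff hd.ne' |>.mp this
    have hL : ∑ x ∈ s, ∏ j ∈ t, g j x = 0 := by
      apply Finset.sum_eq_zero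
      intro x hx
      exact Finset.prod_eq_zero hit (hgz x hx)
    rw [hL]
    apply Finset.prod_nonneg
    intro j hj
    exact Real.rpow_nonneg (hPnn j hj) _
  · push_neg at hzero
    have hPpos : ∀ i ∈ t, 0 < P i := fun i hi => lt_of_le_of_ne (hPnn i hi) (Ne.symm (hzero i hi))
    have hNpos : ∀ i ∈ t, 0 < P i ^ ((d : ℝ)⁻¹) := fun i hi =>
      Real.rpow_pos_of_pos (hPpos i hi) _
    -- normalized functions
    set h : ι → κ → ℝ := fun i x => g i x / P i ^ ((d : ℝ)⁻¹) with hh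
    have hhnn : ∀ i ∈ t, ∀ x ∈ s, 0 ≤ h i x := fun i hi x hx =>
      div_nonneg (hg i hi x hx) (hNpos i hi).le
    have hrec : ∀ i ∈ t, (P i ^ ((d : ℝ)⁻¹)) ^ d = P i := by
      intro i hi
      rw [← Real.rpow_natCast (P i ^ ((d : ℝ)⁻¹)) d, ← Real.rpow_mul (hPnn i hi),
        inv_mul_cancel₀ hd', Real.rpow_one]
    have key : ∑ x ∈ s, ∏ i ∈ t, h i x ≤ 1 := by
      have pointwise : ∀ x ∈ s, ∏ i ∈ t, h i x ≤ ∑ i ∈ t, (d : ℝ)⁻¹ * (h i x ^ d) := by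
        intro x hx
        have := Real.geom_mean_le_arith_mean_weighted t (fun _ => (d : ℝ)⁻¹)
          (fun i => h i x ^ d) (fun i _ => by positivity)
          (by rw [Finset.sum_const, ht, nsmul_eq_mul, mul_inv_cancel₀ hd'])
          (fun i hi => pow_nonneg (hhnn i hi x hx) d)
        refine le_trans (le_of_eq ?_) this
        refine Finset.prod_congr rfl fun i hi => ?_
        show h i x = (h i x ^ d) ^ ((d : ℝ)⁻¹)
        rw [← Real.rpow_natCast (h i x) d, ← Real.rpow_mul (hhnn i hi x hx),
          mul_inv_cancel₀ hd', Real.rpow_one]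
      calc ∑ x ∈ s, ∏ i ∈ t, h i x ≤ ∑ x ∈ s, ∑ i ∈ t, (d : ℝ)⁻¹ * (h i x ^ d) :=
            Finset.sum_le_sum pointwise
        _ = ∑ i ∈ t, (d : ℝ)⁻¹ * ∑ x ∈ s, h i x ^ d := by
            rw [Finset.sum_comm]
            exact Finset.sum_congr rfl fun i _ => (Finset.mul_sum _ _ _).symm
        _ = 1 := by
            have : ∀ i ∈ t, ∑ x ∈ s, h i x ^ d = 1 := by
              intro i hi
              have : ∀ x ∈ s, h i x ^ d = g i x ^ d / P i := by
                intro x hx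
                rw [hh]
                simp only
                rw [div_pow, hrec i hi]
              rw [Finset.sum_congr rfl this, ← Finset.sum_div, div_self (hPpos i hi).ne']
            rw [Finset.sum_congr rfl (fun i hi => by rw [this i hi, mul_one]),
              Finset.sum_const, ht, nsmul_eq_mul, mul_inv_cancel₀ hd']

    have expand : ∑ x ∈ s, ∏ i ∈ t, g i x
        = (∏ i ∈ t, P i ^ ((d : ℝ)⁻¹)) * ∑ x ∈ s, ∏ i ∈ t, h i x := by
      rw [Finset.mul_sum]
      apply Finset.sum_congr rfl
      intro x hx
      rw [← Finset.prod_mul_distrib]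
      apply Finset.prod_congr rfl
      intro i hi
      rw [hh]
      simp only
      rw [mul_div_cancel₀ _ (hNpos i hi).ne']
    rw [expand]
    calc (∏ i ∈ t, P i ^ ((d : ℝ)⁻¹)) * ∑ x ∈ s, ∏ i ∈ t, h i x
        ≤ (∏ i ∈ t, P i ^ ((d : ℝ)⁻¹)) * 1 := by
          apply mul_le_mul_of_nonneg_left key
          exact Finset.prod_nonneg fun i hi => (hNpos i hi).le
      _ = ∏ i ∈ t, P i ^ ((d : ℝ)⁻¹) := mul_one _

/-- Two-point Hölder. -/
lemma two_point_holder {ι : Type*} (d : ℕ) (hd : 0 < d) (t : Finset ι) (ht : t.card = d)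
    (p q : ι → ℝ) (hp : ∀ i ∈ t, 0 ≤ p i) (hq : ∀ i ∈ t, 0 ≤ q i) :
    ∏ i ∈ t, p i + ∏ i ∈ t, q i ≤ ∏ i ∈ t, (p i ^ d + q i ^ d) ^ ((d : ℝ)⁻¹) := by
  have := multi_holder d hd t ht (Finset.univ : Finset Bool)
    (fun i b => if b then p i else q i)
    (fun i hi b _ => by cases b <;> simp [hp i hi, hq i hi])
  simpa [Fintype.sum_bool] using this

/-- Finner-type inequality for a `d`-uniform cover. -/
lemma finner {α β : Type*} [DecidableEq α] (d : ℕ) (hd : 0 < d) (B : Finset β)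
    (A : Finset α) :
    ∀ (N : β → Finset α) (f : β → Finset α → ℝ),
    (∀ v ∈ B, N v ⊆ A) →
    (∀ a ∈ A, (B.filter (fun v => a ∈ N v)).card = d) →
    (∀ v ∈ B, ∀ T, 0 ≤ f v T) →
    ∑ S ∈ A.powerset, ∏ v ∈ B, f v (S ∩ N v) ≤
      ∏ v ∈ B, (∑ T ∈ (N v).powerset, f v T ^ d) ^ ((d : ℝ)⁻¹) := by
  have hd' : (d : ℝ) ≠ 0 := Nat.cast_ne_zero.mpr hd.ne'
  induction A using Finset.induction_on with
  | empty =>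
    intro N f hsub _ hf
    rw [Finset.powerset_empty, Finset.sum_singleton]
    refine le_of_eq (Finset.prod_congr rfl fun v hv => ?_)
    have hNv : N v = ∅ := Finset.subset_empty.mp (hsub v hv)
    rw [hNv, Finset.powerset_empty, Finset.sum_singleton, Finset.empty_inter,
      ← Real.rpow_natCast (f v ∅) d, ← Real.rpow_mul (hf v hv ∅), mul_inv_cancel₀ hd',
      Real.rpow_one]
  | @insert a A ha ih =>
    intro N f hsub hcov hf
    set N' : β → Finset α := fun v => (N v).erase a with hN'
    set f' : β → Finset α → ℝ := fun v T =>
      if a ∈ N v then (f v T ^ d + f v (insert a T) ^ d) ^ ((d : ℝ)⁻¹) else f v T with hf'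
    have hf'nn : ∀ v ∈ B, ∀ T, 0 ≤ f' v T := by
      intro v hv T
      rw [hf']
      simp only
      split
      · exact Real.rpow_nonneg
          (add_nonneg (pow_nonneg (hf v hv T) d) (pow_nonneg (hf v hv _) d)) _
      · exact hf v hv T
    have hBa : (B.filter (fun v => a ∈ N v)).card = d := hcov a (Finset.mem_insert_self a A)
    -- step 1: pointwise claim
    have claim1 : ∀ S ∈ A.powerset,
        ∏ v ∈ B, f v (S ∩ N v) + ∏ v ∈ B, f v (insert a S ∩ N v)
          ≤ ∏ v ∈ B, f' v (S ∩ N' v) := by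
      intro S hS
      have hSA : S ⊆ A := Finset.mem_powerset.mp hS
      have haS : a ∉ S := fun h => ha (hSA h)
      have e2 : ∀ v, S ∩ N' v = S ∩ N v := by
        intro v
        ext x
        simp only [hN', Finset.mem_inter, Finset.mem_erase]
        constructor
        · rintro ⟨h1, _, h2⟩; exact ⟨h1, h2⟩
        · rintro ⟨h1, h2⟩; exact ⟨h1, fun h => haS (h ▸ h1), h2⟩
      have e3 : ∀ v, a ∉ N v → insert a S ∩ N v = S ∩ N v := by
        intro v hv
        rw [Finset.insert_inter_of_notMem hv]
      have e4 : ∀ v, a ∈ N v → insert a S ∩ N v = insert a (S ∩ N' v) := by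
        intro v hv
        rw [Finset.insert_inter_of_mem hv, e2 v]
      rw [← Finset.prod_filter_mul_prod_filter_not B (fun v => a ∈ N v)
            (fun v => f v (S ∩ N v)),
          ← Finset.prod_filter_mul_prod_filter_not B (fun v => a ∈ N v)
            (fun v => f v (insert a S ∩ N v)),
          ← Finset.prod_filter_mul_prod_filter_not B (fun v => a ∈ N v)
            (fun v => f' v (S ∩ N' v))]
      have eq1 : ∀ v ∈ B.filter (fun v => ¬ a ∈ N v),
          f v (insert a S ∩ N v) = f v (S ∩ N v) := by
        intro v hv
        rw [e3 v (Finset.mem_filter.mp hv).2]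
      have eq2 : ∀ v ∈ B.filter (fun v => ¬ a ∈ N v), f' v (S ∩ N' v) = f v (S ∩ N v) := by
        intro v hv
        have hav := (Finset.mem_filter.mp hv).2
        rw [hf']
        simp only
        rw [if_neg hav, e2 v]
      rw [Finset.prod_congr rfl eq1, Finset.prod_congr rfl eq2, ← add_mul]
      apply mul_le_mul_of_nonneg_right
      · -- Hölder over the filter
        have := two_point_holder d hd (B.filter (fun v => a ∈ N v)) hBa
          (fun v => f v (S ∩ N v)) (fun v => f v (insert a S ∩ N v))
          (fun v hv => hf v (Finset.mem_filter.mp hv).1 _)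
          (fun v hv => hf v (Finset.mem_filter.mp hv).1 _)
        refine le_trans this (le_of_eq (Finset.prod_congr rfl fun v hv => ?_))
        have hav := (Finset.mem_filter.mp hv).2
        rw [hf']
        simp only
        rw [if_pos hav, e2 v, e4 v hav, e2 v]
      · exact Finset.prod_nonneg fun v hv => hf v (Finset.mem_filter.mp hv).1 _
    -- step 2: apply IH
    have hsub' : ∀ v ∈ B, N' v ⊆ A := by
      intro v hv x hx
      rw [hN'] at hx
      simp only [Finset.mem_erase] at hx
      rcases Finset.mem_insert.mp (hsub v hv hx.2) with h | h
      · exact absurd h hx.1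
      · exact h
    have hcov' : ∀ b ∈ A, (B.filter (fun v => b ∈ N' v)).card = d := by
      intro b hb
      have hba : b ≠ a := fun h => ha (h ▸ hb)
      have : (B.filter (fun v => b ∈ N' v)) = (B.filter (fun v => b ∈ N v)) := by
        apply Finset.filter_congr
        intro v _
        rw [hN']
        simp [Finset.mem_erase, hba]
      rw [this]
      exact hcov b (Finset.mem_insert_of_mem hb)
    have ihapp := ih N' f' hsub' hcov' hf'nn
    -- step 3: RHS equality
    have rhs_eq : ∀ v ∈ B,
        ∑ T ∈ (N' v).powerset, f' v T ^ d = ∑ T ∈ (N v).powerset, f v T ^ d := by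
      intro v hv
      by_cases hav : a ∈ N v
      · have hNv : N v = insert a (N' v) := by
          rw [hN']; simp only
          rw [Finset.insert_erase hav]
        have haN' : a ∉ N' v := Finset.notMem_erase a (N v)
        rw [hNv, Finset.sum_powerset_insert haN']
        rw [← Finset.sum_add_distrib]
        apply Finset.sum_congr rfl
        intro T _
        rw [hf']
        simp only
        rw [if_pos hav, ← Real.rpow_natCast _ d,
          ← Real.rpow_mul (add_nonneg (pow_nonneg (hf v hv T) d) (pow_nonneg (hf v hv _) d)),
          inv_mul_cancel₀ hd', Real.rpow_one]
      · have : N' v = N v := by rw [hN']; simp only; exact Finset.erase_eq_of_notMem hav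
        rw [this]
        apply Finset.sum_congr rfl
        intro T _
        rw [hf']
        simp only
        rw [if_neg hav]
    calc ∑ S ∈ (insert a A).powerset, ∏ v ∈ B, f v (S ∩ N v)
        = ∑ S ∈ A.powerset, (∏ v ∈ B, f v (S ∩ N v) + ∏ v ∈ B, f v (insert a S ∩ N v)) := by
          rw [Finset.sum_powerset_insert ha, Finset.sum_add_distrib]
      _ ≤ ∑ S ∈ A.powerset, ∏ v ∈ B, f' v (S ∩ N' v) := Finset.sum_le_sum claim1
      _ ≤ ∏ v ∈ B, (∑ T ∈ (N' v).powerset, f' v T ^ d) ^ ((d : ℝ)⁻¹) := ihapp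
      _ = ∏ v ∈ B, (∑ T ∈ (N v).powerset, f v T ^ d) ^ ((d : ℝ)⁻¹) :=
          Finset.prod_congr rfl fun v hv => by rw [rhs_eq v hv]


/-- The number of independent sets of a graph `G` (a set of vertices no two of which
are adjacent; the empty set counts). -/
noncomputable def numIndep {V : Type*} (G : SimpleGraph V) : ℕ :=
  Nat.card {s : Finset V // ∀ u ∈ s, ∀ v ∈ s, ¬ G.Adj u v}

/-- **Kahn's theorem.** If `G` is a finite simple bipartite `d`-regular graph (`d ≥ 1`)
with `n` vertices, then `|I(G)| ≤ (2^(d+1) - 1)^(n/(2d))`. -/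
theorem kahn_theorem {V : Type*} [Fintype V] (G : SimpleGraph V) [DecidableRel G.Adj]
    (d : ℕ) (hd : 1 ≤ d) (hreg : G.IsRegularOfDegree d) (hbip : G.Colorable 2) :
    (numIndep G : ℝ) ≤ ((2 : ℝ) ^ (d + 1) - 1) ^ ((Fintype.card V : ℝ) / (2 * d)) := by
  classical
  obtain ⟨C⟩ := hbip
  have hdpos : 0 < d := hd
  have hd' : (d : ℝ) ≠ 0 := Nat.cast_ne_zero.mpr hdpos.ne'
  set N : V → Finset V := fun v => G.neighborFinset v with hN
  set A : Finset V := Finset.univ.filter (fun v => C v = 0) with hA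
  set B : Finset V := Finset.univ.filter (fun v => C v = 1) with hB
  have htwo : ∀ x : Fin 2, x = 0 ∨ x = 1 := by decide
  have hmemA : ∀ v, v ∈ A ↔ C v = 0 := by intro v; simp [hA]
  have hmemB : ∀ v, v ∈ B ↔ C v = 1 := by intro v; simp [hB]
  have hABunion : ∀ v : V, v ∈ A ∨ v ∈ B := by
    intro v
    rcases htwo (C v) with h | h
    · exact Or.inl ((hmemA v).mpr h)
    · exact Or.inr ((hmemB v).mpr h)
  have hABdisj : Disjoint A B := by
    rw [Finset.disjoint_left]
    intro v hvA hvB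
    rw [hmemA] at hvA
    rw [hmemB] at hvB
    rw [hvA] at hvB
    exact absurd hvB (by decide)
  have hNB : ∀ v ∈ B, N v ⊆ A := by
    intro v hv u hu
    have hadj : G.Adj v u := (SimpleGraph.mem_neighborFinset G v u).mp hu
    have hne := C.valid hadj
    rcases htwo (C u) with h | h
    · exact (hmemA u).mpr h
    · exact absurd (((hmemB v).mp hv).trans h.symm) hne
  have hNA : ∀ a ∈ A, N a ⊆ B := by
    intro a haA u hu
    have hadj : G.Adj a u := (SimpleGraph.mem_neighborFinset G a u).mp hu
    have hne := C.valid hadj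
    rcases htwo (C u) with h | h
    · exact absurd (((hmemA a).mp haA).trans h.symm) hne
    · exact (hmemB u).mpr h
  have hNcard : ∀ v : V, (N v).card = d := fun v => by
    rw [hN]; exact hreg v
  have hcov : ∀ a ∈ A, (B.filter (fun v => a ∈ N v)).card = d := by
    intro a haA
    have : B.filter (fun v => a ∈ N v) = N a := by
      ext v
      simp only [Finset.mem_filter, hN, SimpleGraph.mem_neighborFinset]
      constructor
      · rintro ⟨_, h⟩; exact h.symm
      · intro h
        exact ⟨hNA a haA ((SimpleGraph.mem_neighborFinset G a v).mpr h), h.symm⟩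
    rw [this, hNcard]
  set P : Finset V → Prop := fun s => ∀ u ∈ s, ∀ v ∈ s, ¬ G.Adj u v with hP
  -- counting identity
  have step0 : numIndep G = (Finset.univ.filter P).card := by
    rw [numIndep, Nat.card_eq_fintype_card, Fintype.card_subtype]
  have step1 : (Finset.univ.filter P).card
      = ∑ S ∈ A.powerset, ((Finset.univ.filter P).filter (fun s => s ∩ A = S)).card :=
    Finset.card_eq_sum_card_fiberwise
      (fun s _ => Finset.mem_powerset.mpr Finset.inter_subset_right)
  have fiber : ∀ S ∈ A.powerset,
      ((Finset.univ.filter P).filter (fun s => s ∩ A = S)).card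
        = 2 ^ ((B.filter (fun v => S ∩ N v = ∅)).card) := by
    intro S hS
    have hSA : S ⊆ A := Finset.mem_powerset.mp hS
    rw [← Finset.card_powerset]
    apply Finset.card_bij' (i := fun s _ => s ∩ B)
      (j := fun T _ => S ∪ T)
    · -- hi : maps into powerset
      intro s hs
      rw [Finset.mem_filter, Finset.mem_filter] at hs
      obtain ⟨⟨_, hPs⟩, hsA⟩ := hs
      rw [Finset.mem_powerset]
      intro v hv
      rw [Finset.mem_inter] at hv
      rw [Finset.mem_filter]
      refine ⟨hv.2, ?_⟩
      rw [Finset.eq_empty_iff_forall_notMem]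
      intro u hu
      rw [Finset.mem_inter] at hu
      have hus : u ∈ s := by
        have h1 : u ∈ s ∩ A := by rw [hsA]; exact hu.1
        exact Finset.mem_of_mem_inter_left h1
      have hadj : G.Adj v u := (SimpleGraph.mem_neighborFinset G v u).mp hu.2
      exact hPs v hv.1 u hus hadj
    · -- hj : maps into fiber
      intro T hT
      rw [Finset.mem_powerset] at hT
      rw [Finset.mem_filter, Finset.mem_filter]
      have hTB : T ⊆ B := fun x hx => (Finset.mem_filter.mp (hT hx)).1
      refine ⟨⟨Finset.mem_univ _, ?_⟩, ?_⟩
      · -- independence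
        intro u hu v hv hadj
        rw [Finset.mem_union] at hu hv
        have hne := C.valid hadj
        rcases hu with hu | hu <;> rcases hv with hv | hv
        · exact hne (((hmemA u).mp (hSA hu)).trans ((hmemA v).mp (hSA hv)).symm)
        · -- u ∈ S, v ∈ T
          have hvCS := Finset.mem_filter.mp (hT hv)
          have : u ∈ S ∩ N v := Finset.mem_inter.mpr
            ⟨hu, (SimpleGraph.mem_neighborFinset G v u).mpr hadj.symm⟩
          rw [hvCS.2] at this
          exact absurd this (Finset.notMem_empty u)
        · -- u ∈ T, v ∈ S
          have huCS := Finset.mem_filter.mp (hT hu)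
          have : v ∈ S ∩ N u := Finset.mem_inter.mpr
            ⟨hv, (SimpleGraph.mem_neighborFinset G u v).mpr hadj⟩
          rw [huCS.2] at this
          exact absurd this (Finset.notMem_empty v)
        · exact hne (((hmemB u).mp (hTB hu)).trans ((hmemB v).mp (hTB hv)).symm)
      · -- (S ∪ T) ∩ A = S
        ext x
        rw [Finset.mem_inter, Finset.mem_union]
        constructor
        · rintro ⟨hx | hx, hxA⟩
          · exact hx
          · exact absurd hxA (Finset.disjoint_right.mp hABdisj (hTB hx))
        · intro hx
          exact ⟨Or.inl hx, hSA hx⟩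
    · -- left inverse : S ∪ (s ∩ B) = s
      intro s hs
      rw [Finset.mem_filter] at hs
      obtain ⟨_, hsA⟩ := hs
      ext x
      rw [Finset.mem_union, Finset.mem_inter]
      constructor
      · rintro (hx | ⟨hx, _⟩)
        · rw [← hsA] at hx
          exact Finset.mem_of_mem_inter_left hx
        · exact hx
      · intro hx
        rcases hABunion x with h | h
        · exact Or.inl (hsA ▸ Finset.mem_inter.mpr ⟨hx, h⟩ : x ∈ S)
        · exact Or.inr ⟨hx, h⟩
    · -- right inverse : (S ∪ T) ∩ B = T
      intro T hT
      rw [Finset.mem_powerset] at hT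
      have hTB : T ⊆ B := fun x hx => (Finset.mem_filter.mp (hT hx)).1
      ext x
      rw [Finset.mem_inter, Finset.mem_union]
      constructor
      · rintro ⟨hx | hx, hxB⟩
        · exact absurd hxB (Finset.disjoint_left.mp hABdisj (hSA hx))
        · exact hx
      · intro hx
        exact ⟨Or.inr hx, hTB hx⟩
  have pow_eq : ∀ S : Finset V, (2:ℕ) ^ ((B.filter (fun v => S ∩ N v = ∅)).card)
      = ∏ v ∈ B, if S ∩ N v = ∅ then 2 else 1 := by
    intro S
    rw [Finset.prod_ite, Finset.prod_const, Finset.prod_const, one_pow, mul_one]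
  have key : (numIndep G : ℝ)
      = ∑ S ∈ A.powerset, ∏ v ∈ B, (if S ∩ N v = ∅ then (2:ℝ) else 1) := by
    rw [step0, step1]
    rw [Finset.sum_congr rfl (fun S hS => (fiber S hS).trans (pow_eq S))]
    push_cast [apply_ite (Nat.cast : ℕ → ℝ)]
    rfl
  -- apply Finner
  set f : V → Finset V → ℝ := fun v T => if T = ∅ then (2:ℝ) else 1 with hf
  have hfnn : ∀ v ∈ B, ∀ T : Finset V, 0 ≤ f v T := by
    intro v _ T
    rw [hf]
    simp only
    split <;> norm_num
  have main := finner d hdpos B A N f hNB hcov hfnn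
  have lhs_eq : ∑ S ∈ A.powerset, ∏ v ∈ B, f v (S ∩ N v)
      = ∑ S ∈ A.powerset, ∏ v ∈ B, (if S ∩ N v = ∅ then (2:ℝ) else 1) := rfl
  -- evaluate the RHS of finner
  have hbase : (1:ℝ) ≤ 2 ^ (d+1) := one_le_pow₀ (by norm_num)
  have hbase' : (0:ℝ) ≤ 2 ^ (d+1) - 1 := by linarith
  have inner_eval : ∀ v ∈ B, ∑ T ∈ (N v).powerset, f v T ^ d = 2 ^ (d+1) - 1 := by
    intro v _
    have e1 : ∀ T ∈ (N v).powerset, f v T ^ d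
        = (if T = ∅ then ((2:ℝ)^d - 1) else 0) + 1 := by
      intro T _
      rw [hf]
      simp only
      split
      · ring
      · norm_num
    rw [Finset.sum_congr rfl e1, Finset.sum_add_distrib, Finset.sum_const,
      Finset.card_powerset, hNcard v]
    have e2 : ∑ T ∈ (N v).powerset, (if T = ∅ then ((2:ℝ)^d - 1) else 0)
        = (2:ℝ)^d - 1 := by
      rw [Finset.sum_ite_eq' (N v).powerset (∅ : Finset V) (fun _ => (2:ℝ)^d - 1),
        if_pos (Finset.empty_mem_powerset (N v))]
    rw [e2]
    have : (2:ℝ)^(d+1) = 2^d * 2 := pow_succ 2 d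
    rw [nsmul_eq_mul]
    push_cast
    rw [this]
    ring
  have rhs_eval : ∏ v ∈ B, (∑ T ∈ (N v).powerset, f v T ^ d) ^ ((d : ℝ)⁻¹)
      = ((2:ℝ) ^ (d+1) - 1) ^ (((d:ℝ)⁻¹) * B.card) := by
    rw [Finset.prod_congr rfl (fun v hv => by rw [inner_eval v hv]),
      Finset.prod_const, ← Real.rpow_natCast (((2:ℝ)^(d+1) - 1) ^ ((d:ℝ)⁻¹)) B.card,
      ← Real.rpow_mul hbase']
  -- cardinality bookkeeping
  have hABcard : A.card + B.card = Fintype.card V := by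
    rw [← Finset.card_union_of_disjoint hABdisj]
    rw [show A ∪ B = Finset.univ from Finset.eq_univ_iff_forall.mpr
      (fun v => Finset.mem_union.mpr (hABunion v))]
    exact Finset.card_univ
  have hAeqB : A.card = B.card := by
    have e1 : ∀ v ∈ B, (N v).card = (A.filter (fun a => a ∈ N v)).card := by
      intro v hv
      rw [Finset.filter_mem_eq_inter, Finset.inter_eq_right.mpr (hNB v hv)]
    have e2 : ∑ v ∈ B, (A.filter (fun a => a ∈ N v)).card
        = ∑ a ∈ A, (B.filter (fun v => a ∈ N v)).card := by
      simp only [Finset.card_filter]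
      rw [Finset.sum_comm]
    have e3 : d * B.card = d * A.card := by
      calc d * B.card = ∑ v ∈ B, d := by rw [Finset.sum_const, smul_eq_mul, mul_comm]
        _ = ∑ v ∈ B, (N v).card := Finset.sum_congr rfl fun v _ => (hNcard v).symm
        _ = ∑ v ∈ B, (A.filter (fun a => a ∈ N v)).card := Finset.sum_congr rfl e1
        _ = ∑ a ∈ A, (B.filter (fun v => a ∈ N v)).card := e2
        _ = ∑ a ∈ A, d := Finset.sum_congr rfl hcov
        _ = d * A.card := by rw [Finset.sum_const, smul_eq_mul, mul_comm]
    exact (Nat.eq_of_mul_eq_mul_left hdpos e3).symm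
  have hn : (Fintype.card V : ℝ) = 2 * B.card := by
    rw [← hABcard, hAeqB]
    push_cast
    ring
  have hexp : ((d:ℝ)⁻¹) * B.card = (Fintype.card V : ℝ) / (2 * d) := by
    rw [hn]
    field_simp
  calc (numIndep G : ℝ)
      = ∑ S ∈ A.powerset, ∏ v ∈ B, f v (S ∩ N v) := by rw [key, lhs_eq]
    _ ≤ ∏ v ∈ B, (∑ T ∈ (N v).powerset, f v T ^ d) ^ ((d : ℝ)⁻¹) := main
    _ = ((2:ℝ) ^ (d+1) - 1) ^ (((d:ℝ)⁻¹) * B.card) := rhs_eval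
    _ = ((2:ℝ) ^ (d+1) - 1) ^ ((Fintype.card V : ℝ) / (2 * d)) := by rw [hexp]
end

section
/- Zhao's Theorem: If G is a finite simple d-regular graph (d ≥ 1, not necessarily bipartite) with n vertices, then the number of independent sets of G satisfies |I(G)| ≤ (2^{d+1} − 1)^{n/(2d)}. -/
open Finset MeasureTheory ENNReal

theorem ENNReal.sum_prod_rpow_le_prod_sum_rpow {ι κ : Type*} [Fintype κ] (s : Finset ι)
    (f : ι → κ → ℝ≥0∞) {p : ι → ℝ} (hp : ∑ i ∈ s, p i = 1) (hp₀ : ∀ i ∈ s, 0 ≤ p i) :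
    ∑ k, ∏ i ∈ s, f i k ^ p i ≤ ∏ i ∈ s, (∑ k, f i k) ^ p i := by
  let : MeasurableSpace κ := ⊤
  simpa only [lintegral_count, tsum_fintype] using
    lintegral_prod_norm_pow_le (μ := (Measure.count : Measure κ)) (f := f) s
      (fun i _ => Measurable.of_discrete.aemeasurable) hp hp₀

theorem ENNReal.prod_rpow_add_prod_rpow_le {ι : Type*} (s : Finset ι) (a b : ι → ℝ≥0∞)
    {p : ι → ℝ} (hp : ∑ i ∈ s, p i = 1) (hp₀ : ∀ i ∈ s, 0 ≤ p i) :
    ∏ i ∈ s, a i ^ p i + ∏ i ∈ s, b i ^ p i ≤ ∏ i ∈ s, (a i + b i) ^ p i := by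
  simpa [Fintype.sum_bool] using
    ENNReal.sum_prod_rpow_le_prod_sum_rpow s (fun i k => bif k then a i else b i) hp hp₀

theorem ENNReal.prod_rpow_inv_add_prod_rpow_inv_le {ι : Type*} (s : Finset ι) (P : ι → Prop)
    [DecidablePred P] {a b c : ι → ℝ≥0∞} {d : ℕ} (hd : d ≠ 0) (hcard : #{i ∈ s | P i} = d)
    (hP : ∀ i ∈ s, P i → a i + b i = c i) (hnP : ∀ i ∈ s, ¬ P i → a i = c i ∧ b i = c i) :
    ∏ i ∈ s, a i ^ (d⁻¹ : ℝ) + ∏ i ∈ s, b i ^ (d⁻¹ : ℝ) ≤ ∏ i ∈ s, c i ^ (d⁻¹ : ℝ) := by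
  have hout : ∀ e : ι → ℝ≥0∞, (∀ i ∈ s, ¬ P i → e i = c i) →
      ∏ i ∈ s with ¬ P i, e i ^ (d⁻¹ : ℝ) = ∏ i ∈ s with ¬ P i, c i ^ (d⁻¹ : ℝ) :=
    fun e he => prod_congr rfl fun i hi => by
      rw [mem_filter] at hi; rw [he i hi.1 hi.2]
  simp only [← prod_filter_mul_prod_filter_not s P]
  rw [hout a fun i hi h => (hnP i hi h).1, hout b fun i hi h => (hnP i hi h).2, ← add_mul]
  gcongr
  calc _ ≤ ∏ i ∈ s with P i, (a i + b i) ^ (d⁻¹ : ℝ) :=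
        ENNReal.prod_rpow_add_prod_rpow_le _ a b (by simp [hcard, hd]) fun _ _ => by positivity
    _ = _ := prod_congr rfl fun i hi => by rw [mem_filter] at hi; rw [hP i hi.1 hi.2]

/-- Finner's inequality on the Boolean cube `𝒫 U`. -/
theorem sum_powerset_prod_le_of_card_cover {ι V : Type*} [DecidableEq V] (s : Finset ι)
    (A : ι → Finset V) {d : ℕ} (hd : d ≠ 0) (U : Finset V)
    (hcover : ∀ v ∈ U, #{i ∈ s | v ∈ A i} = d) (f : ι → Finset V → ℝ≥0∞) :
    ∑ S ∈ U.powerset, ∏ i ∈ s, f i (S ∩ A i) ≤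
      ∏ i ∈ s, (∑ T ∈ (U ∩ A i).powerset, f i T ^ d) ^ (d⁻¹ : ℝ) := by
  induction U using Finset.induction_on generalizing f with
  | empty => simp [ENNReal.pow_rpow_inv_natCast hd]
  | @insert v U hv ih =>
    have hcoverU : ∀ u ∈ U, #{i ∈ s | u ∈ A i} = d := fun u hu => hcover u (mem_insert_of_mem hu)
    let g : ι → Finset V → ℝ≥0∞ := fun i T => f i (if v ∈ A i then insert v T else T)
    have hg : ∀ S, ∏ i ∈ s, f i (insert v S ∩ A i) = ∏ i ∈ s, g i (S ∩ A i) := fun S =>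
      prod_congr rfl fun i _ => by
        by_cases h : v ∈ A i
        · simp [g, h, insert_inter_of_mem]
        · simp [g, h, insert_inter_of_notMem]
    have hvU : ∀ i, v ∉ U ∩ A i := fun i h => hv (mem_inter.1 h).1
    rw [sum_powerset_insert hv]
    simp only [hg]
    refine (add_le_add (ih hcoverU f) (ih hcoverU g)).trans
      (ENNReal.prod_rpow_inv_add_prod_rpow_inv_le s (v ∈ A ·) hd (hcover v (mem_insert_self v U))
        (fun i _ h => ?_) (fun i _ h => ?_))
    · rw [insert_inter_of_mem h, sum_powerset_insert (hvU i)]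
      simp [g, h]
    · rw [insert_inter_of_notMem h]
      simp [g, h]

theorem Finset.sum_powerset_ite_eq_empty_pow {α : Type*} [DecidableEq α] (N : Finset α) (d : ℕ) :
    ∑ T ∈ N.powerset, (if T = ∅ then 2 else 1 : ℕ) ^ d = 2 ^ d + (2 ^ #N - 1) := by
  rw [← add_sum_erase _ _ (empty_mem_powerset N), if_pos rfl,
    sum_congr rfl fun T hT => by rw [if_neg (ne_of_mem_erase hT), one_pow], sum_const,
    card_erase_of_mem (empty_mem_powerset N), card_powerset, smul_eq_mul, mul_one]

namespace SimpleGraph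

open scoped symmDiff

variable {V : Type*} [DecidableEq V] (G : SimpleGraph V)

noncomputable def bipartitionSide (Q : Finset V) : Finset V :=
  Classical.epsilon fun X : Finset V => X ⊆ Q ∧ (∀ u ∈ X, ∀ v ∈ X, ¬ G.Adj u v) ∧
    ∀ u ∈ Q \ X, ∀ v ∈ Q \ X, ¬ G.Adj u v

theorem bipartitionSide_spec {A B : Finset V} (hA : ∀ u ∈ A, ∀ v ∈ A, ¬ G.Adj u v)
    (hB : ∀ u ∈ B, ∀ v ∈ B, ¬ G.Adj u v) :
    G.bipartitionSide (A ∆ B) ⊆ A ∆ B ∧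
      (∀ u ∈ G.bipartitionSide (A ∆ B), ∀ v ∈ G.bipartitionSide (A ∆ B), ¬ G.Adj u v) ∧
      ∀ u ∈ A ∆ B \ G.bipartitionSide (A ∆ B), ∀ v ∈ A ∆ B \ G.bipartitionSide (A ∆ B),
        ¬ G.Adj u v := by
  refine Classical.epsilon_spec (p := fun X : Finset V => X ⊆ A ∆ B ∧
    (∀ u ∈ X, ∀ v ∈ X, ¬ G.Adj u v) ∧ ∀ u ∈ A ∆ B \ X, ∀ v ∈ A ∆ B \ X, ¬ G.Adj u v)
    ⟨A \ B, ?_, ?_, ?_⟩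
  · intro x; simp only [mem_sdiff, mem_symmDiff]; tauto
  · intro u hu v hv; exact hA u (mem_sdiff.1 hu).1 v (mem_sdiff.1 hv).1
  · have : A ∆ B \ (A \ B) = B \ A := by ext x; simp only [mem_sdiff, mem_symmDiff]; tauto
    rw [this]
    intro u hu v hv; exact hB u (mem_sdiff.1 hu).1 v (mem_sdiff.1 hv).1

noncomputable def bipartiteSwap (p : Finset V × Finset V) : Finset V × Finset V :=
  (p.1 ∆ G.bipartitionSide (p.1 ∆ p.2), p.2 ∆ G.bipartitionSide (p.1 ∆ p.2))

theorem bipartiteSwap_involutive : Function.Involutive G.bipartiteSwap := by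
  rintro ⟨A, B⟩
  have : (A ∆ G.bipartitionSide (A ∆ B)) ∆ (B ∆ G.bipartitionSide (A ∆ B)) = A ∆ B := by
    rw [symmDiff_symmDiff_symmDiff_comm, symmDiff_self, symmDiff_bot]
  simp [bipartiteSwap, this, symmDiff_symmDiff_cancel_right]

variable [Fintype V] [DecidableRel G.Adj]

def crossFreePairs : Finset (Finset V × Finset V) :=
  {p | ∀ u ∈ p.1, ∀ v ∈ p.2, ¬ G.Adj u v}

theorem bipartiteSwap_mem_crossFreePairs {A B : Finset V}
    (hA : ∀ u ∈ A, ∀ v ∈ A, ¬ G.Adj u v) (hB : ∀ u ∈ B, ∀ v ∈ B, ¬ G.Adj u v) :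
    G.bipartiteSwap (A, B) ∈ G.crossFreePairs := by
  obtain ⟨hXQ, hX, hQX⟩ := G.bipartitionSide_spec hA hB
  simp only [crossFreePairs, bipartiteSwap, mem_filter, mem_univ, true_and]
  intro u hu v hv huv
  grind [mem_symmDiff]

theorem numIndep_sq_le_card_crossFreePairs : numIndep G ^ 2 ≤ #G.crossFreePairs := by
  rw [numIndep, Nat.card_eq_fintype_card, Fintype.card_subtype, sq, ← card_product]
  refine card_le_card_of_injOn G.bipartiteSwap (fun p hp => ?_)
    G.bipartiteSwap_involutive.injective.injOn
  simp only [coe_product, Set.mem_prod, mem_coe, mem_filter, mem_univ, true_and] at hp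
  exact G.bipartiteSwap_mem_crossFreePairs hp.1 hp.2

theorem filter_crossFree_eq_powerset (S : Finset V) :
    ({T | ∀ u ∈ S, ∀ v ∈ T, ¬ G.Adj u v} : Finset (Finset V)) =
      ({v | S ∩ G.neighborFinset v = ∅} : Finset V).powerset := by
  ext T
  simp only [mem_filter, mem_univ, true_and, mem_powerset, subset_iff, eq_empty_iff_forall_notMem,
    mem_inter, mem_neighborFinset, not_and]
  exact ⟨fun h v hv u hu huv => h u hu v hv huv.symm, fun h u hu v hv huv => h hv u hu huv.symm⟩

theorem card_crossFreePairs :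
    #G.crossFreePairs = ∑ S : Finset V, ∏ v, if S ∩ G.neighborFinset v = ∅ then 2 else 1 := by
  rw [crossFreePairs, card_filter, ← univ_product_univ, sum_product]
  refine sum_congr rfl fun S _ => ?_
  rw [← card_filter, filter_crossFree_eq_powerset, card_powerset, prod_ite, prod_const,
    prod_const_one, mul_one]

theorem card_crossFreePairs_le {d : ℕ} (hd : d ≠ 0) (hreg : G.IsRegularOfDegree d) :
    (#G.crossFreePairs : ℝ≥0∞) ≤ ((2 ^ (d + 1) - 1 : ℕ) : ℝ≥0∞) ^ ((Fintype.card V : ℝ) / d) := by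
  have hcover : ∀ u ∈ (univ : Finset V), #{v | u ∈ G.neighborFinset v} = d := fun u _ => by
    simp_rw [mem_neighborFinset, adj_comm]
    rw [← neighborFinset_eq_filter, card_neighborFinset_eq_degree, hreg u]
  have hfactor : ∀ v, ∑ T ∈ (univ ∩ G.neighborFinset v).powerset,
      (if T = ∅ then 2 else 1 : ℝ≥0∞) ^ d = ((2 ^ (d + 1) - 1 : ℕ) : ℝ≥0∞) := fun v => by
    have := sum_powerset_ite_eq_empty_pow (univ ∩ G.neighborFinset v) d
    rw [univ_inter, card_neighborFinset_eq_degree, hreg v] at this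
    rw [univ_inter, show 2 ^ (d + 1) - 1 = 2 ^ d + (2 ^ d - 1) by
      have := Nat.one_le_two_pow (n := d); omega, ← this]
    push_cast
    rfl
  calc (#G.crossFreePairs : ℝ≥0∞)
      = ∑ S ∈ univ.powerset, ∏ v, (if S ∩ G.neighborFinset v = ∅ then 2 else 1 : ℝ≥0∞) := by
        rw [card_crossFreePairs, powerset_univ]
        simp only [Nat.cast_sum, Nat.cast_prod, Nat.cast_ite, Nat.cast_ofNat, Nat.cast_one]
    _ ≤ ∏ v, ((2 ^ (d + 1) - 1 : ℕ) : ℝ≥0∞) ^ (d⁻¹ : ℝ) := by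
        simpa only [hfactor] using sum_powerset_prod_le_of_card_cover univ (fun v => G.neighborFinset v) hd
          univ hcover (fun (_ : V) (T : Finset V) => if T = ∅ then (2 : ℝ≥0∞) else 1)
    _ = _ := by
        rw [prod_const, card_univ, ← ENNReal.rpow_natCast, ← ENNReal.rpow_mul, inv_mul_eq_div]

end SimpleGraph

/-- **Zhao's theorem.** If `G` is a finite simple `d`-regular graph (`d ≥ 1`, not
necessarily bipartite) with `n` vertices, then `|I(G)| ≤ (2^(d+1) - 1)^(n/(2d))`. -/
theorem zhao_theorem {V : Type*} [Fintype V] (G : SimpleGraph V) [DecidableRel G.Adj]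
    (d : ℕ) (hd : 1 ≤ d) (hreg : G.IsRegularOfDegree d) :
    (numIndep G : ℝ) ≤ ((2 : ℝ) ^ (d + 1) - 1) ^ ((Fintype.card V : ℝ) / (2 * d)) := by
  classical
  have hbase : ((2 ^ (d + 1) - 1 : ℕ) : ℝ) = (2 : ℝ) ^ (d + 1) - 1 := by
    rw [Nat.cast_sub Nat.one_le_two_pow]; push_cast; rfl
  have hcross : (#G.crossFreePairs : ℝ) ≤ ((2 : ℝ) ^ (d + 1) - 1) ^ ((Fintype.card V : ℝ) / d) := by
    have := ENNReal.toReal_mono (by finiteness) (G.card_crossFreePairs_le (by omega) hreg)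
    rwa [toReal_natCast, ← ENNReal.toReal_rpow, toReal_natCast, hbase] at this
  have hsq : (numIndep G : ℝ) ^ 2 ≤ ((2 : ℝ) ^ (d + 1) - 1) ^ ((Fintype.card V : ℝ) / d) :=
    le_trans (mod_cast G.numIndep_sq_le_card_crossFreePairs) hcross
  have hbase₀ : (0 : ℝ) ≤ 2 ^ (d + 1) - 1 := by rw [← hbase]; positivity
  rw [← pow_le_pow_iff_left₀ (Nat.cast_nonneg _) (Real.rpow_nonneg hbase₀ _) two_ne_zero,
    ← Real.rpow_mul_natCast hbase₀]
  refine hsq.trans_eq (congrArg _ ?_)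
  push_cast
  ring
end

section
/- Zhao's inequality: For every finite simple graph G, |I(G)|² ≤ |I(G × K₂)|, where G × K₂ is the bipartite double cover of G: its vertex set is V(G) × {0,1} and (u,0) is adjacent to (v,1) if and only if u and v are adjacent in G (with no other adjacencies). -/
/-- The bipartite double cover `G × K₂` of `G`: the vertex set is `V × {0,1}`
(modelled as `V × Bool`), with `(u, i)` adjacent to `(v, j)` iff `i ≠ j` and
`u` is adjacent to `v` in `G`. -/
def doubleCover {V : Type*} (G : SimpleGraph V) : SimpleGraph (V × Bool) where
  Adj x y := x.2 ≠ y.2 ∧ G.Adj x.1 y.1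
  symm := ⟨fun x y h => ⟨h.1.symm, G.adj_symm h.2⟩⟩
  loopless := ⟨fun x h => h.1 rfl⟩

/-! Zhao's injection `I(G) × I(G) → I(G × K₂)`. Given independent sets `A`, `B`, put the
vertices of `A ∩ B` on both sheets and each component of `G[A ∆ B]` entirely on one sheet,
chosen by whether a fixed representative of the component lies in `A`. The image is independent:
no edge leaves a component, and `A ∩ B` has no neighbours in `A ∪ B`. Every edge of `G[A ∆ B]`
joins `A \ B` to `B \ A`, so membership in `A` alternates along it; knowing it at the
representative therefore recovers `A` on the whole component, and the map is injective. -/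

open Finset
open scoped symmDiff

theorem Finset.eq_and_eq_of_inter_eq_of_union_eq {α : Type*} [DecidableEq α]
    {A B A' B' : Finset α} (hi : A ∩ B = A' ∩ B') (hu : A ∪ B = A' ∪ B')
    (hd : ∀ v ∈ A ∆ B, v ∈ A ↔ v ∈ A') :
    A = A' ∧ B = B' := by
  simp only [Finset.ext_iff, mem_inter, mem_union, mem_symmDiff] at *
  grind

namespace SimpleGraph

variable {V : Type*}

def edgesWithin (G : SimpleGraph V) (s : Set V) : SimpleGraph V where
  Adj u v := u ∈ s ∧ v ∈ s ∧ G.Adj u v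
  symm := ⟨fun _ _ ⟨hu, hv, h⟩ => ⟨hv, hu, h.symm⟩⟩
  loopless := ⟨fun _ h => h.2.2.ne rfl⟩

theorem Reachable.of_adj_closed {H : SimpleGraph V} {P : V → Prop}
    (hP : ∀ u v, H.Adj u v → P u → P v) {u v : V} (h : H.Reachable u v) (hu : P u) : P v := by
  obtain ⟨p⟩ := h
  induction p with
  | nil => exact hu
  | cons hadj _ ih => exact ih (hP _ _ hadj hu)

variable (G : SimpleGraph V) [DecidableEq V]

theorem mem_iff_not_mem_of_adj_of_mem_symmDiff {A B : Finset V}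
    (hA : ∀ u ∈ A, ∀ v ∈ A, ¬ G.Adj u v) (hB : ∀ u ∈ B, ∀ v ∈ B, ¬ G.Adj u v) {u v : V}
    (hu : u ∈ A ∆ B) (hv : v ∈ A ∆ B) (huv : G.Adj u v) : v ∈ A ↔ u ∉ A := by
  rw [mem_symmDiff] at hu hv
  grind

noncomputable def zhaoLevel (A B : Finset V) (v : V) : Bool :=
  decide (((G.edgesWithin ↑(A ∆ B)).connectedComponentMk v).out ∉ A)

noncomputable def zhaoSet (A B : Finset V) : Finset (V × Bool) :=
  (A ∩ B) ×ˢ univ ∪ (A ∆ B).image fun v => (v, G.zhaoLevel A B v)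

theorem mem_zhaoSet {A B : Finset V} {v : V} {b : Bool} :
    (v, b) ∈ G.zhaoSet A B ↔ v ∈ A ∩ B ∨ (v ∈ A ∆ B ∧ b = G.zhaoLevel A B v) := by
  simp only [zhaoSet, mem_union, mem_product, mem_univ, and_true, mem_image, Prod.mk.injEq]
  grind

theorem zhaoLevel_eq_of_adj {A B : Finset V} {u v : V} (hu : u ∈ A ∆ B) (hv : v ∈ A ∆ B)
    (huv : G.Adj u v) : G.zhaoLevel A B u = G.zhaoLevel A B v := by
  have hreach : (G.edgesWithin ↑(A ∆ B)).Reachable u v := Adj.reachable ⟨hu, hv, huv⟩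
  rw [zhaoLevel, zhaoLevel, ConnectedComponent.sound hreach]

theorem mem_inter_iff_forall_mem_zhaoSet {A B : Finset V} {v : V} :
    v ∈ A ∩ B ↔ ∀ b, (v, b) ∈ G.zhaoSet A B := by
  simp only [mem_zhaoSet]
  refine ⟨fun h b => .inl h, fun h => ?_⟩
  rcases h (!G.zhaoLevel A B v) with h | ⟨-, h⟩
  · exact h
  · simp at h

theorem mem_union_iff_exists_mem_zhaoSet {A B : Finset V} {v : V} :
    v ∈ A ∪ B ↔ ∃ b, (v, b) ∈ G.zhaoSet A B := by
  simp only [mem_zhaoSet, mem_inter, mem_union, mem_symmDiff]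
  grind

theorem not_adj_of_mem_inter_of_mem_union {A B : Finset V}
    (hA : ∀ u ∈ A, ∀ v ∈ A, ¬ G.Adj u v) (hB : ∀ u ∈ B, ∀ v ∈ B, ¬ G.Adj u v) {u v : V}
    (hu : u ∈ A ∩ B) (hv : v ∈ A ∪ B) : ¬ G.Adj u v := by
  rw [mem_inter] at hu
  rcases mem_union.1 hv with hv | hv
  exacts [hA u hu.1 v hv, hB u hu.2 v hv]

theorem zhaoSet_indep {A B : Finset V} (hA : ∀ u ∈ A, ∀ v ∈ A, ¬ G.Adj u v)
    (hB : ∀ u ∈ B, ∀ v ∈ B, ¬ G.Adj u v) :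
    ∀ p ∈ G.zhaoSet A B, ∀ q ∈ G.zhaoSet A B, ¬ (doubleCover G).Adj p q := by
  rintro ⟨u, i⟩ hu ⟨v, j⟩ hv ⟨hij, huv⟩
  have hu' := G.mem_union_iff_exists_mem_zhaoSet.2 ⟨i, hu⟩
  have hv' := G.mem_union_iff_exists_mem_zhaoSet.2 ⟨j, hv⟩
  rw [mem_zhaoSet] at hu hv
  rcases hu with hu | ⟨hu, rfl⟩
  · exact G.not_adj_of_mem_inter_of_mem_union hA hB hu hv' huv
  rcases hv with hv | ⟨hv, rfl⟩
  · exact G.not_adj_of_mem_inter_of_mem_union hA hB hv hu' huv.symm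
  exact hij (G.zhaoLevel_eq_of_adj hu hv huv)

theorem zhaoSet_injective {A B A' B' : Finset V} (hA : ∀ u ∈ A, ∀ v ∈ A, ¬ G.Adj u v)
    (hB : ∀ u ∈ B, ∀ v ∈ B, ¬ G.Adj u v) (hA' : ∀ u ∈ A', ∀ v ∈ A', ¬ G.Adj u v)
    (hB' : ∀ u ∈ B', ∀ v ∈ B', ¬ G.Adj u v) (h : G.zhaoSet A B = G.zhaoSet A' B') :
    A = A' ∧ B = B' := by
  have hinter : A ∩ B = A' ∩ B' := by
    ext v
    simp only [G.mem_inter_iff_forall_mem_zhaoSet, h]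
  have hunion : A ∪ B = A' ∪ B' := by
    ext v
    simp only [G.mem_union_iff_exists_mem_zhaoSet, h]
  have hsymm : A ∆ B = A' ∆ B' := by
    rw [symmDiff_eq_sup_sdiff_inf, symmDiff_eq_sup_sdiff_inf]
    exact congrArg₂ (· \ ·) hunion hinter
  refine Finset.eq_and_eq_of_inter_eq_of_union_eq hinter hunion fun v hv => ?_
  set H := G.edgesWithin ↑(A ∆ B)
  set r := (H.connectedComponentMk v).out
  have hrep : r ∈ A ↔ r ∈ A' := by
    have hv' : (v, G.zhaoLevel A B v) ∈ G.zhaoSet A' B' :=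
      h ▸ G.mem_zhaoSet.2 (.inr ⟨hv, rfl⟩)
    have hvinter : v ∉ A' ∩ B' := by
      rw [← hinter, mem_inter]
      rw [mem_symmDiff] at hv
      tauto
    have hlevel := ((G.mem_zhaoSet.1 hv').resolve_left hvinter).2
    rw [zhaoLevel, zhaoLevel, ← hsymm, decide_eq_decide] at hlevel
    exact not_iff_not.1 hlevel
  have hreach : H.Reachable r v := ConnectedComponent.exact (H.connectedComponentMk v).out_eq
  refine hreach.of_adj_closed (P := fun w => w ∈ A ↔ w ∈ A') (fun x y hxy hx => ?_) hrep
  obtain ⟨hxD, hyD, hxy⟩ := hxy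
  rw [G.mem_iff_not_mem_of_adj_of_mem_symmDiff hA hB hxD hyD hxy,
    G.mem_iff_not_mem_of_adj_of_mem_symmDiff hA' hB' (hsymm ▸ hxD) (hsymm ▸ hyD) hxy, hx]

end SimpleGraph

/-- **Zhao's inequality.** For every finite simple graph `G`,
`|I(G)|² ≤ |I(G × K₂)|`, where `G × K₂` is the bipartite double cover of `G`. -/
theorem zhao_inequality {V : Type*} [Fintype V] (G : SimpleGraph V) :
    numIndep G ^ 2 ≤ numIndep (doubleCover G) := by
  classical
  rw [sq, numIndep, ← Nat.card_prod]
  refine Nat.card_le_card_of_injective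
    (fun p => ⟨G.zhaoSet p.1.1 p.2.1, G.zhaoSet_indep p.1.2 p.2.2⟩) ?_
  rintro ⟨⟨A, hA⟩, ⟨B, hB⟩⟩ ⟨⟨A', hA'⟩, ⟨B', hB'⟩⟩ h
  obtain ⟨rfl, rfl⟩ := G.zhaoSet_injective hA hB hA' hB' (congrArg Subtype.val h)
  rfl
end

section
/- Main bound for general bipartite graphs: Let G be a finite simple bipartite graph without isolated vertices, with parts L and R. For each d in the set D_L of degrees occurring among vertices of L, let L_d be the set of vertices of L of degree d, and let R_d be the set of vertices of R adjacent to at least one vertex of L_d. Then |I(G)| ≤ Π_{d ∈ D_L} Π_{r ∈ R_d} (2^d + 2^{d(r)} − 1)^{1/d}, where d(r) denotes the degree of the vertex r. -/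
/-!
Write an independent set as `A ∪ B` with `A ⊆ L`, `B ⊆ R`: given `A`, the set `B` is any set of
vertices of `R` without neighbours in `A`. Hence `|I(G)|` is at most the sum over `A ⊆ L` of a
product over `r ∈ R` of factors `2` (if `A` misses `N(r)`) or `1`, and the factor of `r` is
dominated by the product, over the degrees `d` met in `N(r)`, of factors depending only on
`A ∩ N(r) ∩ L_d`. A vertex of `L` of degree `d` lies in exactly `d` of the sets `N(r) ∩ L_d`,
so exponents `d` give it weights `1/d` summing to `1`, and Finner's inequality (Hölder's
inequality applied one vertex of `L` at a time) bounds the sum by the product of the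
`ℓ^d`-norms `(2^d + 2^{|N(r) ∩ L_d|} - 1)^{1/d}`.
-/

open Finset MeasureTheory
open scoped ENNReal

theorem ENNReal.prod_add_prod_le_prod_rpow_add_rpow {ι : Type*} (s : Finset ι)
    (f g : ι → ℝ≥0∞) {p : ι → ℝ} (hp : ∀ i ∈ s, 0 < p i) (hsum : ∑ i ∈ s, (p i)⁻¹ = 1) :
    ∏ i ∈ s, f i + ∏ i ∈ s, g i ≤ ∏ i ∈ s, (f i ^ p i + g i ^ p i) ^ (p i)⁻¹ := by
  -- Hölder's inequality for the counting measure on `Bool`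
  have holder := lintegral_prod_norm_pow_le (μ := (Measure.count : Measure Bool)) s
    (f := fun i b => (bif b then f i else g i) ^ p i)
    (fun _ _ => Measurable.of_discrete.aemeasurable) hsum fun i hi => (inv_pos.2 (hp i hi)).le
  simp only [lintegral_count, tsum_fintype, Fintype.sum_bool, cond_true, cond_false] at holder
  convert holder using 2 <;>
    exact prod_congr rfl fun i hi => (ENNReal.rpow_rpow_inv (hp i hi).ne' _).symm

theorem ENNReal.sum_powerset_prod_le_prod_sum_powerset_rpow {V ι : Type*} [DecidableEq V]
    (L : Finset V) (I : Finset ι) (S : ι → Finset V) (f : ι → Finset V → ℝ≥0∞) {p : ι → ℝ}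
    (hS : ∀ i ∈ I, S i ⊆ L) (hp : ∀ i ∈ I, 0 < p i)
    (hcover : ∀ l ∈ L, ∑ i ∈ I with l ∈ S i, (p i)⁻¹ = 1) :
    ∑ A ∈ L.powerset, ∏ i ∈ I, f i (A ∩ S i) ≤
      ∏ i ∈ I, (∑ B ∈ (S i).powerset, f i B ^ p i) ^ (p i)⁻¹ := by
  induction L using Finset.induction generalizing S f with
  | empty =>
    refine le_of_eq ?_
    rw [powerset_empty, sum_singleton]
    refine prod_congr rfl fun i hi => ?_
    rw [subset_empty.1 (hS i hi), powerset_empty, sum_singleton, inter_self,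
      ENNReal.rpow_rpow_inv (hp i hi).ne']
  | @insert l L hl ih =>
    -- Summing out the vertex `l` by Hölder's inequality merges, for each `i` with `l ∈ S i`,
    -- the values of `f i` with and without `l` into their `ℓ^{p i}`-norm `g i`.
    set g : ι → Finset V → ℝ≥0∞ := fun i B =>
      if l ∈ S i then (f i B ^ p i + f i (insert l B) ^ p i) ^ (p i)⁻¹ else f i B
    have inter_erase_eq : ∀ A ∈ L.powerset, ∀ i, A ∩ (S i).erase l = A ∩ S i :=
      fun A hA i => by
        rw [inter_erase, erase_eq_of_notMem fun h => hl (mem_powerset.1 hA (mem_inter.1 h).1)]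
    have merge : ∀ A ∈ L.powerset, ∏ i ∈ I, f i (A ∩ S i) + ∏ i ∈ I, f i (insert l A ∩ S i) ≤
        ∏ i ∈ I, g i (A ∩ (S i).erase l) := by
      intro A hA
      simp only [inter_erase_eq A hA, g]
      have on_mem : ∀ i ∈ {i ∈ I | l ∈ S i}, f i (insert l A ∩ S i) = f i (insert l (A ∩ S i)) :=
        fun i hi => by rw [insert_inter_of_mem (mem_filter.1 hi).2]
      have on_notMem : ∀ i ∈ {i ∈ I | l ∉ S i}, f i (insert l A ∩ S i) = f i (A ∩ S i) :=
        fun i hi => by rw [insert_inter_of_notMem (mem_filter.1 hi).2]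
      rw [prod_ite, ← prod_filter_mul_prod_filter_not I (l ∈ S ·),
        ← prod_filter_mul_prod_filter_not I (l ∈ S ·) (fun i => f i (insert l A ∩ S i)),
        prod_congr rfl on_mem, prod_congr rfl on_notMem, ← add_mul]
      gcongr
      exact ENNReal.prod_add_prod_le_prod_rpow_add_rpow _ _ _
        (fun i hi => hp i (mem_filter.1 hi).1) (hcover l (mem_insert_self l L))
    have hcover' : ∀ l' ∈ L, ∑ i ∈ I with l' ∈ (S i).erase l, (p i)⁻¹ = 1 := by
      intro l' hl'
      rw [← hcover l' (mem_insert_of_mem hl')]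
      simp only [mem_erase, ne_of_mem_of_not_mem hl' hl, ne_eq, not_false_eq_true, true_and]
    have sum_merge : ∀ i ∈ I, ∑ B ∈ ((S i).erase l).powerset, g i B ^ p i =
        ∑ B ∈ (S i).powerset, f i B ^ p i := by
      intro i hi
      by_cases hli : l ∈ S i
      · simp only [g, if_pos hli, ENNReal.rpow_inv_rpow (hp i hi).ne']
        rw [sum_add_distrib, ← sum_powerset_insert (notMem_erase l _), insert_erase hli]
      · simp only [g, if_neg hli, erase_eq_of_notMem hli]
    calc ∑ A ∈ (insert l L).powerset, ∏ i ∈ I, f i (A ∩ S i)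
        = ∑ A ∈ L.powerset, (∏ i ∈ I, f i (A ∩ S i) + ∏ i ∈ I, f i (insert l A ∩ S i)) := by
          rw [sum_powerset_insert hl, sum_add_distrib]
      _ ≤ ∑ A ∈ L.powerset, ∏ i ∈ I, g i (A ∩ (S i).erase l) := sum_le_sum merge
      _ ≤ ∏ i ∈ I, (∑ B ∈ ((S i).erase l).powerset, g i B ^ p i) ^ (p i)⁻¹ :=
          ih _ g (fun i hi => subset_insert_iff.1 (hS i hi)) hcover'
      _ = ∏ i ∈ I, (∑ B ∈ (S i).powerset, f i B ^ p i) ^ (p i)⁻¹ :=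
          prod_congr rfl fun i hi => by rw [sum_merge i hi]

theorem Finset.sum_powerset_ite_eq_empty {α M : Type*} [DecidableEq α] [AddCommMonoidWithOne M]
    (S : Finset α) (a : M) : ∑ B ∈ S.powerset, (if B = ∅ then a else 1) = a + (2 ^ #S - 1 : ℕ) := by
  rw [sum_ite, filter_eq' _ ∅, if_pos (empty_mem_powerset S), filter_ne', sum_singleton,
    sum_const, card_erase_of_mem (empty_mem_powerset S), card_powerset, nsmul_one]

namespace SimpleGraph

variable {V : Type*}

section Bipartition

variable {G : SimpleGraph V} {L R : Finset V} (hdisj : Disjoint L R)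
  (hbip : ∀ u v, G.Adj u v → (u ∈ L ∧ v ∈ R) ∨ (u ∈ R ∧ v ∈ L))
include hdisj hbip

theorem mem_right_of_adj_of_mem_left {l r : V} (hl : l ∈ L) (h : G.Adj l r) : r ∈ R :=
  (hbip l r h).elim And.right fun h' => absurd hl (Finset.disjoint_right.1 hdisj h'.1)

theorem mem_left_of_adj_of_mem_right {r l : V} (hr : r ∈ R) (h : G.Adj r l) : l ∈ L :=
  (hbip r l h).elim (fun h' => absurd hr (Finset.disjoint_left.1 hdisj h'.1)) And.right

end Bipartition

variable [Fintype V] (G : SimpleGraph V) [DecidableRel G.Adj] {L R : Finset V}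

variable (L R) in
def degreePairs : Finset (Σ _ : ℕ, V) :=
  (L.image fun v => G.degree v).sigma fun d =>
    R.filter fun r => ∃ l ∈ L, G.degree l = d ∧ G.Adj l r

-- For `r ∈ R` this is the set `N(r) ∩ L_d` of the bound, with `i = ⟨d, r⟩`.
def neighborFinsetOfDegree (i : Σ _ : ℕ, V) : Finset V :=
  {l ∈ G.neighborFinset i.2 | G.degree l = i.1}

theorem degreePairs_fst_pos (hiso : ∀ v, 0 < G.degree v) {i : Σ _ : ℕ, V}
    (hi : i ∈ G.degreePairs L R) : 0 < i.1 := by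
  obtain ⟨v, -, hv⟩ := mem_image.1 (mem_sigma.1 hi).1
  exact hv ▸ hiso v

theorem numIndep_le_sum_powerset [DecidableEq V] (hunion : L ∪ R = univ) :
    numIndep G ≤ ∑ A ∈ L.powerset, 2 ^ #{r ∈ R | Disjoint A (G.neighborFinset r)} := by
  rw [numIndep, Nat.card_eq_fintype_card, Fintype.card_subtype]
  simp only [← card_powerset, ← card_sigma]
  refine card_le_card_of_injOn (fun s => ⟨s ∩ L, s ∩ R⟩) ?_ ?_
  · intro s hs
    simp only [coe_filter, mem_univ, true_and, Set.mem_ofPred_eq] at hs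
    simp only [coe_sigma, Set.mem_sigma_iff, mem_coe, mem_powerset, inter_subset_right, true_and]
    intro r hr
    simp only [mem_inter] at hr
    refine mem_filter.2 ⟨hr.2, Finset.disjoint_left.2 fun a ha han => ?_⟩
    exact hs r hr.1 a (mem_inter.1 ha).1 ((G.mem_neighborFinset r a).1 han)
  · intro s _ t _ hst
    simp only [Sigma.mk.injEq, heq_eq_eq] at hst
    rw [← inter_univ s, ← inter_univ t, ← hunion, inter_union_distrib_left,
      inter_union_distrib_left, hst.1, hst.2]

theorem sum_powerset_ite_empty_rpow_le [DecidableEq V] (i : Σ _ : ℕ, V) :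
    ∑ B ∈ (G.neighborFinsetOfDegree i).powerset, (if B = ∅ then (2 : ℝ≥0∞) else 1) ^ (i.1 : ℝ) ≤
      ((2 ^ i.1 + 2 ^ G.degree i.2 - 1 : ℕ) : ℝ≥0∞) := by
  simp only [apply_ite (· ^ (i.1 : ℝ)), ENNReal.rpow_natCast, one_pow]
  rw [sum_powerset_ite_eq_empty]
  have hcard : #(G.neighborFinsetOfDegree i) ≤ G.degree i.2 :=
    card_neighborFinset_eq_degree G i.2 ▸ card_le_card (filter_subset _ _)
  have hpow : 2 ^ #(G.neighborFinsetOfDegree i) ≤ 2 ^ G.degree i.2 :=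
    Nat.pow_le_pow_right two_pos hcard
  have hone : 1 ≤ 2 ^ #(G.neighborFinsetOfDegree i) := Nat.one_le_two_pow
  exact_mod_cast (by omega : 2 ^ i.1 + (2 ^ #(G.neighborFinsetOfDegree i) - 1) ≤ _)

section Bipartition

variable {G} (hdisj : Disjoint L R) (hbip : ∀ u v, G.Adj u v → (u ∈ L ∧ v ∈ R) ∨ (u ∈ R ∧ v ∈ L))
include hdisj hbip

theorem neighborFinsetOfDegree_subset {i : Σ _ : ℕ, V} (hi : i ∈ G.degreePairs L R) :
    G.neighborFinsetOfDegree i ⊆ L := fun _ hl =>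
  mem_left_of_adj_of_mem_right hdisj hbip (mem_filter.1 (mem_sigma.1 hi).2).1
    ((G.mem_neighborFinset _ _).1 (mem_filter.1 hl).1)

variable [DecidableEq V]

theorem two_pow_card_disjoint_le_prod (hiso : ∀ v, 0 < G.degree v) (A : Finset V) :
    (2 : ℝ≥0∞) ^ #{r ∈ R | Disjoint A (G.neighborFinset r)} ≤
      ∏ i ∈ G.degreePairs L R, if A ∩ G.neighborFinsetOfDegree i = ∅ then 2 else 1 := by
  choose nbr hnbr using fun v => (G.degree_pos_iff_exists_adj v).1 (hiso v)
  set J := {r ∈ R | Disjoint A (G.neighborFinset r)}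
  let e : V → Σ _ : ℕ, V := fun r => ⟨G.degree (nbr r), r⟩
  have hinj : Set.InjOn e J := fun r _ r' _ h => (Sigma.mk.inj_iff.1 h).2.eq
  have hsub : J.image e ⊆ G.degreePairs L R := by
    simp only [subset_iff, mem_image, degreePairs, mem_sigma, mem_filter]
    rintro _ ⟨r, hr, rfl⟩
    have hl := mem_left_of_adj_of_mem_right hdisj hbip (mem_filter.1 hr).1 (hnbr r)
    exact ⟨⟨nbr r, hl, rfl⟩, (mem_filter.1 hr).1, nbr r, hl, rfl, (hnbr r).symm⟩
  calc (2 : ℝ≥0∞) ^ #J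
      = ∏ i ∈ J.image e, if A ∩ G.neighborFinsetOfDegree i = ∅ then 2 else 1 := by
        rw [prod_image hinj, ← prod_const]
        refine prod_congr rfl fun r hr => (if_pos ?_).symm
        exact disjoint_iff_inter_eq_empty.1 ((mem_filter.1 hr).2.mono_right (filter_subset _ _))
    _ ≤ _ := prod_le_prod_of_subset_of_one_le' hsub fun i _ _ => by split_ifs <;> norm_num

theorem sum_filter_inv_degree_eq_one {l : V} (hl : l ∈ L) (hdeg : 0 < G.degree l) :
    ∑ i ∈ G.degreePairs L R with l ∈ G.neighborFinsetOfDegree i, ((i.1 : ℝ))⁻¹ = 1 := by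
  have hfilter : {i ∈ G.degreePairs L R | l ∈ G.neighborFinsetOfDegree i} =
      (G.neighborFinset l).map (Function.Embedding.sigmaMk (G.degree l)) := by
    ext i
    simp only [mem_filter, mem_map, degreePairs, neighborFinsetOfDegree, mem_sigma, mem_image,
      mem_neighborFinset, Function.Embedding.sigmaMk_apply]
    constructor
    · rintro ⟨-, hadj, hd⟩
      exact ⟨i.2, hadj.symm, by rw [hd]⟩
    · rintro ⟨r, hr, rfl⟩
      exact ⟨⟨⟨l, hl, rfl⟩, mem_right_of_adj_of_mem_left hdisj hbip hl hr, l, hl, rfl, hr⟩,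
        hr.symm, rfl⟩
  rw [hfilter, sum_map]
  simp only [Function.Embedding.sigmaMk_apply, sum_const, card_neighborFinset_eq_degree,
    nsmul_eq_mul]
  exact mul_inv_cancel₀ (Nat.cast_ne_zero.2 hdeg.ne')

theorem numIndep_le_prod_degreePairs (hunion : L ∪ R = univ) (hiso : ∀ v, 0 < G.degree v) :
    (numIndep G : ℝ≥0∞) ≤ ∏ i ∈ G.degreePairs L R,
      ((2 ^ i.1 + 2 ^ G.degree i.2 - 1 : ℕ) : ℝ≥0∞) ^ (i.1 : ℝ)⁻¹ :=
  calc (numIndep G : ℝ≥0∞)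
      ≤ ∑ A ∈ L.powerset, (2 : ℝ≥0∞) ^ #{r ∈ R | Disjoint A (G.neighborFinset r)} := by
        exact_mod_cast numIndep_le_sum_powerset G hunion
    _ ≤ ∑ A ∈ L.powerset, ∏ i ∈ G.degreePairs L R,
          if A ∩ G.neighborFinsetOfDegree i = ∅ then 2 else 1 :=
        sum_le_sum fun A _ => two_pow_card_disjoint_le_prod hdisj hbip hiso A
    _ ≤ ∏ i ∈ G.degreePairs L R, (∑ B ∈ (G.neighborFinsetOfDegree i).powerset,
          (if B = ∅ then (2 : ℝ≥0∞) else 1) ^ (i.1 : ℝ)) ^ (i.1 : ℝ)⁻¹ :=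
        ENNReal.sum_powerset_prod_le_prod_sum_powerset_rpow L _ G.neighborFinsetOfDegree
          (fun _ B => if B = ∅ then 2 else 1) (p := fun i => (i.1 : ℝ))
          (fun _ hi => neighborFinsetOfDegree_subset hdisj hbip hi)
          (fun _ hi => Nat.cast_pos.2 (degreePairs_fst_pos G hiso hi))
          (fun l hl => sum_filter_inv_degree_eq_one hdisj hbip hl (hiso l))
    _ ≤ _ := prod_le_prod' fun i _ =>
        ENNReal.rpow_le_rpow (sum_powerset_ite_empty_rpow_le G i) (by positivity)

end Bipartition

end SimpleGraph

/-- **Main bound for general bipartite graphs.** Let `G` be a finite simple bipartite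
graph without isolated vertices, with parts `L` and `R`. For each degree `d` occurring
among the vertices of `L`, let `L_d` be the vertices of `L` of degree `d`, and let
`R_d` be the vertices of `R` adjacent to at least one vertex of `L_d`. Then
`|I(G)| ≤ ∏_{d ∈ D_L} ∏_{r ∈ R_d} (2^d + 2^(d(r)) - 1)^(1/d)`. -/
theorem main_bound_bipartite {V : Type*} [Fintype V] [DecidableEq V]
    (G : SimpleGraph V) [DecidableRel G.Adj] (L R : Finset V)
    (hdisj : Disjoint L R) (hunion : L ∪ R = Finset.univ)
    (hbip : ∀ u v, G.Adj u v → (u ∈ L ∧ v ∈ R) ∨ (u ∈ R ∧ v ∈ L))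
    (hiso : ∀ v : V, 0 < G.degree v) :
    (numIndep G : ℝ) ≤
      ∏ d ∈ L.image (fun v => G.degree v),
        ∏ r ∈ R.filter (fun r => ∃ l ∈ L, G.degree l = d ∧ G.Adj l r),
          ((2 : ℝ) ^ d + 2 ^ (G.degree r) - 1) ^ (1 / (d : ℝ)) := by
  have hfinite : ∏ i ∈ G.degreePairs L R,
      ((2 ^ i.1 + 2 ^ G.degree i.2 - 1 : ℕ) : ℝ≥0∞) ^ (i.1 : ℝ)⁻¹ ≠ ⊤ :=
    ENNReal.prod_ne_top fun i _ =>
      ENNReal.rpow_ne_top_of_nonneg (by positivity) (ENNReal.natCast_ne_top _)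
  calc (numIndep G : ℝ)
      ≤ ∏ i ∈ G.degreePairs L R, ((2 ^ i.1 + 2 ^ G.degree i.2 - 1 : ℕ) : ℝ) ^ (i.1 : ℝ)⁻¹ := by
        simpa only [ENNReal.toReal_prod, ← ENNReal.toReal_rpow, ENNReal.toReal_natCast] using
          ENNReal.toReal_mono hfinite
            (SimpleGraph.numIndep_le_prod_degreePairs hdisj hbip hunion hiso)
    _ = _ := by
        rw [SimpleGraph.degreePairs, prod_sigma]
        refine prod_congr rfl fun d _ => prod_congr rfl fun r _ => ?_
        push_cast [one_div, Nat.cast_sub (Nat.one_le_two_pow.trans (Nat.le_add_right _ _))]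
        rfl
end

section
/- One-side-regular case of the main bound: Let G be a finite simple bipartite graph with parts L and R, without isolated vertices, such that every vertex of L has degree exactly d (d ≥ 1). Then |I(G)| ≤ Π_{r ∈ R} (2^d + 2^{d(r)} − 1)^{1/d}, where d(r) denotes the degree of the vertex r ∈ R. -/
/-!
Entropy method. Let `X` be a uniformly random independent set, so `log |I(G)| = H(X)`. By the chain
rule, and because conditioning on more coordinates reduces entropy (submodularity),
`H(X) ≤ H(X_L) + ∑_{v ∈ R} H(X_v | X_{N(v)})`, and since every vertex of `L` lies in exactly `d` of
the sets `N(v)`, Shearer's lemma gives `d · H(X_L) ≤ ∑_{v ∈ R} H(X_{N(v)})`. Given `X_{N(v)}`, the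
vertex `v` is free exactly when `X ∩ N(v) = ∅`, so `H(X_v | X_{N(v)}) = q_v log 2` with
`q_v = P(X ∩ N(v) = ∅)`, and Jensen's inequality bounds `d q_v log 2 + H(X_{N(v)})` by
`log (2^d + 2^{d(v)} - 1)`: the empty trace of `N(v)` gets weight `2^d`, the others weight `1`.
-/

open Finset

open Real Function

lemma inv_card_mul_sum_log_le {ι : Type*} (s : Finset ι) {f : ι → ℝ} (hf : ∀ i ∈ s, 0 < f i) :
    (#s : ℝ)⁻¹ * ∑ i ∈ s, log (f i) ≤ log ((#s : ℝ)⁻¹ * ∑ i ∈ s, f i) := by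
  rcases s.eq_empty_or_nonempty with rfl | hs
  · simp
  simpa only [smul_eq_mul, mul_sum] using strictConcaveOn_log_Ioi.concaveOn.le_map_sum
    (t := s) (w := fun _ => (#s : ℝ)⁻¹) (fun _ _ => by positivity)
    (by simp [hs.card_pos.ne']) hf

lemma le_prod_rpow_of_mul_log_le {ι : Type*} {s : Finset ι} {x d : ℝ} {c : ι → ℝ} (hx : 0 < x)
    (hd : 0 < d) (hc : ∀ i ∈ s, 0 < c i) (h : d * log x ≤ ∑ i ∈ s, log (c i)) :
    x ≤ ∏ i ∈ s, c i ^ (1 / d) := by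
  have hpos : ∀ i ∈ s, 0 < c i ^ (1 / d) := fun i hi => rpow_pos_of_pos (hc i hi) _
  rw [← log_le_log_iff hx (prod_pos hpos), log_prod fun i hi => (hpos i hi).ne',
    sum_congr rfl fun i hi => log_rpow (hc i hi) _, ← mul_sum, one_div, le_inv_mul_iff₀ hd]
  exact h

namespace SetFamily

variable {V : Type*} [DecidableEq V] (𝒜 : Finset (Finset V))

/-- For `X` uniform on `𝒜`, `traceCard 𝒜 T s / #𝒜` is the probability that `X ∩ T = s ∩ T`, so
`entropy 𝒜 T` is the Shannon entropy of `X ∩ T` and `condEntropy 𝒜 A B` is `H(X ∩ A | X ∩ B)`. -/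
def traceCard (T s : Finset V) : ℕ := #{t ∈ 𝒜 | t ∩ T = s ∩ T}

def traces (T : Finset V) : Finset (Finset V) := 𝒜.image (· ∩ T)

noncomputable def entropy (T : Finset V) : ℝ :=
  (#𝒜 : ℝ)⁻¹ * ∑ s ∈ 𝒜, (log #𝒜 - log (traceCard 𝒜 T s))

noncomputable def condEntropy (A B : Finset V) : ℝ := entropy 𝒜 (A ∪ B) - entropy 𝒜 B

variable {𝒜} {s t T U : Finset V}

lemma traceCard_pos (hs : s ∈ 𝒜) (T : Finset V) : 0 < traceCard 𝒜 T s :=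
  card_pos.2 ⟨s, mem_filter.2 ⟨hs, rfl⟩⟩

lemma traceCard_congr (h : s ∩ T = t ∩ T) : traceCard 𝒜 T s = traceCard 𝒜 T t := by
  rw [traceCard, traceCard, h]

lemma traceCard_inter_of_subset (h : T ⊆ U) (s : Finset V) :
    traceCard 𝒜 T (s ∩ U) = traceCard 𝒜 T s :=
  traceCard_congr (by rw [inter_assoc, inter_eq_right.2 h])

lemma traceCard_anti (h : T ⊆ U) (s : Finset V) : traceCard 𝒜 U s ≤ traceCard 𝒜 T s := by
  refine card_le_card (monotone_filter_right _ fun t _ heq => ?_)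
  simpa only [inter_assoc, inter_eq_right.2 h] using congrArg (· ∩ T) heq

lemma mem_traces : t ∈ traces 𝒜 T ↔ ∃ s ∈ 𝒜, s ∩ T = t := mem_image

lemma subset_of_mem_traces (ht : t ∈ traces 𝒜 T) : t ⊆ T := by
  obtain ⟨s, -, rfl⟩ := mem_traces.1 ht
  exact inter_subset_right

lemma traceCard_pos_of_mem_traces {S : Finset V} (ht : t ∈ traces 𝒜 T) (hS : S ⊆ T) :
    0 < traceCard 𝒜 S t := by
  obtain ⟨s, hs, rfl⟩ := mem_traces.1 ht
  rw [traceCard_inter_of_subset hS]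
  exact traceCard_pos hs S

lemma inter_mem_traces {S : Finset V} (ht : t ∈ traces 𝒜 T) (hS : S ⊆ T) :
    t ∩ S ∈ traces 𝒜 S := by
  obtain ⟨s, hs, rfl⟩ := mem_traces.1 ht
  exact mem_traces.2 ⟨s, hs, by rw [inter_assoc, inter_eq_right.2 hS]⟩

lemma card_traces_le (T : Finset V) : #(traces 𝒜 T) ≤ 2 ^ #T :=
  (card_le_card fun _ ht => mem_powerset.2 (subset_of_mem_traces ht)).trans_eq (card_powerset T)

lemma sum_comp_inter_eq_sum_traces {M : Type*} [AddCommMonoid M] (T : Finset V)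
    (g : Finset V → M) :
    ∑ s ∈ 𝒜, g (s ∩ T) = ∑ τ ∈ traces 𝒜 T, traceCard 𝒜 T τ • g τ := by
  rw [sum_comp]
  refine sum_congr rfl fun τ hτ => ?_
  obtain ⟨s, -, rfl⟩ := mem_traces.1 hτ
  rw [traceCard, inter_assoc, inter_self]

lemma sum_traceCard_traces (T : Finset V) : ∑ τ ∈ traces 𝒜 T, traceCard 𝒜 T τ = #𝒜 := by
  simpa using (sum_comp_inter_eq_sum_traces (𝒜 := 𝒜) (M := ℕ) T fun _ => 1).symm

lemma sum_div_traceCard (T : Finset V) (g : Finset V → ℝ) :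
    ∑ s ∈ 𝒜, g (s ∩ T) / traceCard 𝒜 T s = ∑ τ ∈ traces 𝒜 T, g τ := by
  calc ∑ s ∈ 𝒜, g (s ∩ T) / traceCard 𝒜 T s
      = ∑ s ∈ 𝒜, g (s ∩ T) / traceCard 𝒜 T (s ∩ T) := by
        simp only [traceCard_inter_of_subset subset_rfl]
    _ = ∑ τ ∈ traces 𝒜 T, traceCard 𝒜 T τ • (g τ / traceCard 𝒜 T τ) :=
        sum_comp_inter_eq_sum_traces T fun τ => g τ / traceCard 𝒜 T τ
    _ = ∑ τ ∈ traces 𝒜 T, g τ := sum_congr rfl fun τ hτ => by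
        have := traceCard_pos_of_mem_traces hτ subset_rfl
        rw [nsmul_eq_mul]
        field_simp

lemma sum_traceCard_filter_traces {S : Finset V} (h : S ⊆ T) (γ : Finset V) :
    ∑ τ ∈ traces 𝒜 T with τ ∩ S = γ ∩ S, traceCard 𝒜 T τ = traceCard 𝒜 S γ := by
  calc ∑ τ ∈ traces 𝒜 T with τ ∩ S = γ ∩ S, traceCard 𝒜 T τ
      = ∑ τ ∈ traces 𝒜 T, traceCard 𝒜 T τ • if τ ∩ S = γ ∩ S then 1 else 0 := by
        simp [sum_filter]
    _ = ∑ t ∈ 𝒜, if t ∩ T ∩ S = γ ∩ S then 1 else 0 :=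
        (sum_comp_inter_eq_sum_traces T fun τ => if τ ∩ S = γ ∩ S then 1 else 0).symm
    _ = traceCard 𝒜 S γ := by
        simp only [inter_assoc, inter_eq_right.2 h, traceCard, card_filter]

lemma sum_traceCard_le_traceCard_inter (X Y α : Finset V) :
    ∑ τ ∈ traces 𝒜 (X ∪ Y) with τ ∩ X = α, traceCard 𝒜 Y τ ≤ traceCard 𝒜 (X ∩ Y) α := by
  set F := {τ ∈ traces 𝒜 (X ∪ Y) | τ ∩ X = α}
  -- a trace on `X ∪ Y` with `X`-part `α` is determined by its `Y`-part, which agrees with `α`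
  -- on `X ∩ Y`
  have hinj : Set.InjOn (· ∩ Y) F := by
    intro τ₁ h₁ τ₂ h₂ (hY : τ₁ ∩ Y = τ₂ ∩ Y)
    rw [mem_coe, mem_filter] at h₁ h₂
    rw [← inter_eq_left.2 (subset_of_mem_traces h₁.1),
      ← inter_eq_left.2 (subset_of_mem_traces h₂.1), inter_union_distrib_left,
      inter_union_distrib_left, h₁.2, h₂.2, hY]
  have hmaps : F.image (· ∩ Y) ⊆ {β ∈ traces 𝒜 Y | β ∩ (X ∩ Y) = α ∩ (X ∩ Y)} := by
    simp only [subset_iff, mem_image, mem_filter, F]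
    rintro _ ⟨τ, ⟨hτ, hτX⟩, rfl⟩
    refine ⟨inter_mem_traces hτ subset_union_right, ?_⟩
    rw [← hτX]
    ext x
    simp only [mem_inter]
    tauto
  calc ∑ τ ∈ F, traceCard 𝒜 Y τ = ∑ β ∈ F.image (· ∩ Y), traceCard 𝒜 Y β := by
        rw [sum_image hinj]
        exact sum_congr rfl fun τ _ => (traceCard_inter_of_subset subset_rfl τ).symm
    _ ≤ ∑ β ∈ traces 𝒜 Y with β ∩ (X ∩ Y) = α ∩ (X ∩ Y), traceCard 𝒜 Y β :=
        sum_le_sum_of_subset hmaps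
    _ = traceCard 𝒜 (X ∩ Y) α := sum_traceCard_filter_traces inter_subset_right α

lemma entropy_sub_entropy (T U : Finset V) :
    entropy 𝒜 T - entropy 𝒜 U =
      (#𝒜 : ℝ)⁻¹ * ∑ s ∈ 𝒜, (log (traceCard 𝒜 U s) - log (traceCard 𝒜 T s)) := by
  simp only [entropy, ← mul_sub, ← sum_sub_distrib, sub_sub_sub_cancel_left]

lemma entropy_mono (h : T ⊆ U) : entropy 𝒜 T ≤ entropy 𝒜 U := by
  rw [← sub_nonneg, entropy_sub_entropy]
  refine mul_nonneg (by positivity) (sum_nonneg fun s hs => sub_nonneg.2 ?_)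
  exact log_le_log (by exact_mod_cast traceCard_pos hs U) (by exact_mod_cast traceCard_anti h s)

lemma condEntropy_nonneg (A B : Finset V) : 0 ≤ condEntropy 𝒜 A B :=
  sub_nonneg.2 (entropy_mono subset_union_right)

@[simp]
lemma entropy_empty : entropy 𝒜 ∅ = 0 := by
  simp [entropy, traceCard]

@[simp]
lemma entropy_univ [Fintype V] : entropy 𝒜 univ = log #𝒜 := by
  have h : ∀ s ∈ 𝒜, traceCard 𝒜 univ s = 1 := fun s hs => by
    simp [traceCard, filter_eq', hs]
  rw [entropy, sum_congr rfl fun s hs => by rw [h s hs, Nat.cast_one, log_one, sub_zero],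
    sum_const, nsmul_eq_mul]
  rcases eq_or_ne (#𝒜 : ℝ) 0 with h0 | h0
  · simp [h0]
  · field_simp

lemma sum_traceCard_ratio_le (X Y : Finset V) :
    ∑ s ∈ 𝒜, (traceCard 𝒜 X s * traceCard 𝒜 Y s : ℝ) /
      (traceCard 𝒜 (X ∪ Y) s * traceCard 𝒜 (X ∩ Y) s) ≤ #𝒜 := by
  have hXY : X ∩ Y ⊆ X := inter_subset_left
  calc _ = ∑ τ ∈ traces 𝒜 (X ∪ Y),
        (traceCard 𝒜 X τ * traceCard 𝒜 Y τ : ℝ) / traceCard 𝒜 (X ∩ Y) τ := by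
        rw [← sum_div_traceCard]
        refine sum_congr rfl fun s _ => ?_
        rw [traceCard_inter_of_subset subset_union_left,
          traceCard_inter_of_subset subset_union_right,
          traceCard_inter_of_subset (hXY.trans subset_union_left), div_div,
          mul_comm (traceCard 𝒜 (X ∪ Y) s : ℝ)]
    _ = ∑ α ∈ traces 𝒜 X, (traceCard 𝒜 X α : ℝ) / traceCard 𝒜 (X ∩ Y) α *
          ∑ τ ∈ traces 𝒜 (X ∪ Y) with τ ∩ X = α, (traceCard 𝒜 Y τ : ℝ) := by
        rw [← sum_fiberwise_of_maps_to fun τ hτ => inter_mem_traces hτ subset_union_left]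
        refine sum_congr rfl fun α _ => ?_
        rw [mul_sum]
        refine sum_congr rfl fun τ hτ => ?_
        obtain ⟨-, rfl⟩ := mem_filter.1 hτ
        rw [traceCard_inter_of_subset subset_rfl, traceCard_inter_of_subset hXY]
        ring
    _ ≤ ∑ α ∈ traces 𝒜 X,
          (traceCard 𝒜 X α : ℝ) / traceCard 𝒜 (X ∩ Y) α * traceCard 𝒜 (X ∩ Y) α := by
        gcongr with α
        exact_mod_cast sum_traceCard_le_traceCard_inter X Y α
    _ = #𝒜 := by
        rw [← sum_traceCard_traces X, Nat.cast_sum]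
        refine sum_congr rfl fun α hα => ?_
        have := traceCard_pos_of_mem_traces hα hXY
        field_simp

theorem entropy_union_add_entropy_inter_le (X Y : Finset V) :
    entropy 𝒜 (X ∪ Y) + entropy 𝒜 (X ∩ Y) ≤ entropy 𝒜 X + entropy 𝒜 Y := by
  set c : Finset V → Finset V → ℝ := fun T s => traceCard 𝒜 T s
  set r : Finset V → ℝ := fun s => c X s * c Y s / (c (X ∪ Y) s * c (X ∩ Y) s)
  have hc : ∀ T, ∀ s ∈ 𝒜, c T s ≠ 0 := fun T s hs => by
    simpa [c] using (traceCard_pos hs T).ne'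
  have hlog : ∀ s ∈ 𝒜,
      log (r s) = log (c X s) + log (c Y s) - log (c (X ∪ Y) s) - log (c (X ∩ Y) s) := by
    intro s hs
    rw [log_div (mul_ne_zero (hc X s hs) (hc Y s hs)) (mul_ne_zero (hc _ s hs) (hc _ s hs)),
      log_mul (hc X s hs) (hc Y s hs), log_mul (hc _ s hs) (hc _ s hs)]
    ring
  have hjensen := inv_card_mul_sum_log_le 𝒜 (f := r) fun s hs => by
    have := hc X s hs; have := hc Y s hs; have := hc (X ∪ Y) s hs; have := hc (X ∩ Y) s hs
    positivity
  have hratio : log ((#𝒜 : ℝ)⁻¹ * ∑ s ∈ 𝒜, r s) ≤ 0 :=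
    log_nonpos (by positivity) (inv_mul_le_one_of_le₀ (sum_traceCard_ratio_le X Y) (by positivity))
  have hdiff : entropy 𝒜 (X ∪ Y) + entropy 𝒜 (X ∩ Y) - entropy 𝒜 X - entropy 𝒜 Y =
      (#𝒜 : ℝ)⁻¹ * ∑ s ∈ 𝒜, log (r s) := by
    simp only [entropy, sum_congr rfl hlog, sum_add_distrib, sum_sub_distrib, c]
    ring
  linarith

theorem condEntropy_anti {A B C : Finset V} (h : B ⊆ C) :
    condEntropy 𝒜 A C ≤ condEntropy 𝒜 A B := by
  have hsub := entropy_union_add_entropy_inter_le (𝒜 := 𝒜) (A ∪ B) C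
  rw [union_assoc, union_eq_right.2 h] at hsub
  have hmono := entropy_mono (𝒜 := 𝒜) (subset_inter subset_union_right h : B ⊆ (A ∪ B) ∩ C)
  rw [condEntropy, condEntropy]
  linarith

theorem entropy_union_eq_add_sum_condEntropy {β : Type*} [LinearOrder β] {φ : V → β}
    (hφ : Injective φ) (B T : Finset V) :
    entropy 𝒜 (B ∪ T) =
      entropy 𝒜 B + ∑ u ∈ T, condEntropy 𝒜 {u} (B ∪ {w ∈ T | φ w < φ u}) := by
  induction T using Finset.induction_on_max_value φ with
  | empty => simp
  | insert a S haS hmax ih =>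
    have hlt : ∀ x ∈ S, φ x < φ a := fun x hx =>
      (hmax x hx).lt_of_ne (hφ.ne (ne_of_mem_of_not_mem hx haS))
    have hpred : ∀ u ∈ S, {w ∈ insert a S | φ w < φ u} = {w ∈ S | φ w < φ u} := fun u hu => by
      rw [filter_insert, if_neg (not_lt.2 (hmax u hu))]
    rw [sum_insert haS, filter_insert, if_neg (lt_irrefl _), filter_true_of_mem hlt,
      sum_congr rfl fun u hu => by rw [hpred u hu], condEntropy, union_insert, insert_eq]
    linarith

theorem entropy_union_le_add_sum_condEntropy (L R : Finset V) (N : V → Finset V)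
    (hN : ∀ v ∈ R, N v ⊆ L) :
    entropy 𝒜 (L ∪ R) ≤ entropy 𝒜 L + ∑ v ∈ R, condEntropy 𝒜 {v} (N v) := by
  rw [entropy_union_eq_add_sum_condEntropy embeddingToCardinal.injective L R]
  gcongr with v hv
  exact condEntropy_anti ((hN v hv).trans subset_union_left)

theorem mul_entropy_le_sum_entropy {ι : Type*} (J : Finset ι) (F : ι → Finset V) {L : Finset V}
    {d : ℕ} (hF : ∀ j ∈ J, F j ⊆ L) (hcover : ∀ u ∈ L, d ≤ #{j ∈ J | u ∈ F j}) :
    d * entropy 𝒜 L ≤ ∑ j ∈ J, entropy 𝒜 (F j) := by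
  obtain ⟨φ, hφ⟩ : ∃ φ : V → Cardinal, Injective φ := ⟨_, embeddingToCardinal.injective⟩
  set c : V → ℝ := fun u => condEntropy 𝒜 {u} {w ∈ L | φ w < φ u}
  have hchain (T : Finset V) :
      entropy 𝒜 T = ∑ u ∈ T, condEntropy 𝒜 {u} {w ∈ T | φ w < φ u} := by
    simpa using entropy_union_eq_add_sum_condEntropy (𝒜 := 𝒜) hφ ∅ T
  calc d * entropy 𝒜 L = ∑ u ∈ L, d * c u := by rw [hchain, mul_sum]
    _ ≤ ∑ u ∈ L, #{j ∈ J | u ∈ F j} * c u :=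
        sum_le_sum fun u hu => by gcongr; exacts [condEntropy_nonneg _ _, hcover u hu]
    _ = ∑ j ∈ J, ∑ u ∈ F j, c u := by
        rw [sum_comm' (t' := L) (s' := fun u => {j ∈ J | u ∈ F j})]
        · simp
        · intro j u
          simp only [mem_filter]
          exact ⟨fun h => ⟨h, hF j h.1 h.2⟩, And.left⟩
    _ ≤ ∑ j ∈ J, entropy 𝒜 (F j) := sum_le_sum fun j hj => by
        rw [hchain]
        exact sum_le_sum fun u _ => condEntropy_anti (filter_subset_filter _ (hF j hj))

theorem mul_log_add_entropy_le (h𝒜 : ∅ ∈ 𝒜) (T : Finset V) {a : ℝ} (ha : 0 < a) :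
    #{s ∈ 𝒜 | s ∩ T = ∅} / #𝒜 * log a + entropy 𝒜 T ≤ log (a + 2 ^ #T - 1) := by
  -- Jensen for the weights `w`, whose average is the number of traces plus `a - 1`
  set g : Finset V → ℝ := fun τ => if τ = ∅ then a else 1
  set w : Finset V → ℝ := fun s => g (s ∩ T) * #𝒜 / traceCard 𝒜 T s
  have hN : (0 : ℝ) < #𝒜 := by exact_mod_cast card_pos.2 ⟨∅, h𝒜⟩
  have hg : ∀ τ, 0 < g τ := fun τ => by dsimp only [g]; split_ifs <;> positivity
  have hc : ∀ s ∈ 𝒜, (0 : ℝ) < traceCard 𝒜 T s := fun s hs => by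
    exact_mod_cast traceCard_pos hs T
  have hlhs : #{s ∈ 𝒜 | s ∩ T = ∅} / #𝒜 * log a + entropy 𝒜 T =
      (#𝒜 : ℝ)⁻¹ * ∑ s ∈ 𝒜, log (w s) := by
    have hlog : ∀ s ∈ 𝒜, log (w s) =
        (if s ∩ T = ∅ then log a else 0) + (log #𝒜 - log (traceCard 𝒜 T s)) := fun s hs => by
      rw [log_div (by have := hg (s ∩ T); positivity) (hc s hs).ne', log_mul (hg _).ne' hN.ne']
      simp only [g, apply_ite log, log_one]
      ring
    rw [sum_congr rfl hlog, sum_add_distrib, ← sum_filter, sum_const, nsmul_eq_mul, entropy]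
    field_simp
  have havg : (#𝒜 : ℝ)⁻¹ * ∑ s ∈ 𝒜, w s = #(traces 𝒜 T) + (a - 1) := by
    have hempty : ∅ ∈ traces 𝒜 T := mem_traces.2 ⟨∅, h𝒜, empty_inter T⟩
    calc (#𝒜 : ℝ)⁻¹ * ∑ s ∈ 𝒜, w s = ∑ s ∈ 𝒜, g (s ∩ T) / traceCard 𝒜 T s := by
          rw [mul_sum]
          exact sum_congr rfl fun s _ => by simp only [w]; field_simp
      _ = ∑ τ ∈ traces 𝒜 T, (1 + if τ = ∅ then a - 1 else 0) := by
          rw [sum_div_traceCard]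
          exact sum_congr rfl fun τ _ => by dsimp only [g]; split_ifs <;> ring
      _ = #(traces 𝒜 T) + (a - 1) := by
          rw [sum_add_distrib, sum_ite_eq', if_pos hempty]
          simp
  have hcard : (#(traces 𝒜 T) : ℝ) ≤ 2 ^ #T := by exact_mod_cast card_traces_le T
  have hpos : (0 : ℝ) < #(traces 𝒜 T) + (a - 1) := by
    have : (1 : ℝ) ≤ #(traces 𝒜 T) := by
      exact_mod_cast card_pos.2 ⟨∅, mem_traces.2 ⟨∅, h𝒜, empty_inter T⟩⟩
    linarith
  calc _ = (#𝒜 : ℝ)⁻¹ * ∑ s ∈ 𝒜, log (w s) := hlhs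
    _ ≤ log ((#𝒜 : ℝ)⁻¹ * ∑ s ∈ 𝒜, w s) := inv_card_mul_sum_log_le 𝒜 fun s hs => by
        have := hg (s ∩ T); have := hc s hs; positivity
    _ ≤ log (a + 2 ^ #T - 1) := by
        rw [havg]
        exact log_le_log hpos (by linarith)

lemma inter_insert_eq_inter_insert_iff {v : V} :
    t ∩ insert v T = s ∩ insert v T ↔ t ∩ T = s ∩ T ∧ (v ∈ t ↔ v ∈ s) := by
  simp only [Finset.ext_iff, mem_inter, mem_insert]
  grind

lemma traceCard_insert_of_forall_mem_iff {v : V}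
    (h : ∀ t ∈ 𝒜, t ∩ T = s ∩ T → (v ∈ t ↔ v ∈ s)) :
    traceCard 𝒜 (insert v T) s = traceCard 𝒜 T s := by
  refine congrArg card (filter_congr fun t ht => ?_)
  rw [inter_insert_eq_inter_insert_iff]
  exact ⟨And.left, fun hT => ⟨hT, h t ht hT⟩⟩

lemma traceCard_eq_two_mul_traceCard_insert {v : V} (hv : v ∉ T)
    (hins : ∀ t ∈ 𝒜, t ∩ T = s ∩ T → insert v t ∈ 𝒜)
    (hera : ∀ t ∈ 𝒜, t ∩ T = s ∩ T → t.erase v ∈ 𝒜) :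
    traceCard 𝒜 T s = 2 * traceCard 𝒜 (insert v T) s := by
  set C := {t ∈ 𝒜 | t ∩ T = s ∩ T}
  have hsplit : traceCard 𝒜 T s = #{t ∈ C | v ∈ t} + #{t ∈ C | v ∉ t} :=
    (card_filter_add_card_filter_not _).symm
  have htoggle : #{t ∈ C | v ∈ t} = #{t ∈ C | v ∉ t} := by
    refine card_nbij' (·.erase v) (insert v) (fun t ht => ?_) (fun t ht => ?_)
      (fun t ht => insert_erase (mem_filter.1 ht).2) (fun t ht => erase_insert (mem_filter.1 ht).2)
    all_goals simp only [C, mem_coe, mem_filter] at ht ⊢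
    · have hT : t.erase v ∩ T = t ∩ T := by rw [erase_inter_comm, erase_eq_of_notMem hv]
      exact ⟨⟨hera t ht.1.1 ht.1.2, hT.trans ht.1.2⟩, notMem_erase v t⟩
    · have hT : insert v t ∩ T = t ∩ T := insert_inter_of_notMem hv
      exact ⟨⟨hins t ht.1.1 ht.1.2, hT.trans ht.1.2⟩, mem_insert_self v t⟩
  have hclass : traceCard 𝒜 (insert v T) s = #{t ∈ C | v ∈ t ↔ v ∈ s} := by
    simp only [C, traceCard, filter_filter, inter_insert_eq_inter_insert_iff]
  by_cases hvs : v ∈ s <;> simp only [hvs, iff_true, iff_false] at hclass <;> omega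

end SetFamily

namespace SimpleGraph

open SetFamily

variable {V : Type*} [Fintype V]

lemma neighborFinset_subset_of_bipartite {G : SimpleGraph V} [DecidableRel G.Adj]
    {A B : Finset V} (hAB : Disjoint A B)
    (h : ∀ u w, G.Adj u w → (u ∈ A ∧ w ∈ B) ∨ (u ∈ B ∧ w ∈ A)) {v : V} (hv : v ∈ B) :
    G.neighborFinset v ⊆ A := fun u hu => by
  rcases h v u ((mem_neighborFinset G v u).1 hu) with ⟨hvA, -⟩ | ⟨-, huA⟩
  exacts [absurd hv (Finset.disjoint_left.1 hAB hvA), huA]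

variable [DecidableEq V]

lemma filter_mem_neighborFinset_of_bipartite {G : SimpleGraph V} [DecidableRel G.Adj]
    {A B : Finset V} (hAB : Disjoint A B)
    (h : ∀ u w, G.Adj u w → (u ∈ A ∧ w ∈ B) ∨ (u ∈ B ∧ w ∈ A)) {u : V} (hu : u ∈ A) :
    {v ∈ B | u ∈ G.neighborFinset v} = G.neighborFinset u := by
  have hNB := neighborFinset_subset_of_bipartite hAB.symm (fun a b hab => (h a b hab).symm) hu
  ext w
  simp only [mem_filter, mem_neighborFinset, G.adj_comm w u]
  exact ⟨And.right, fun huw => ⟨hNB ((G.mem_neighborFinset u w).2 huw), huw⟩⟩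

def indepSets (G : SimpleGraph V) [DecidableRel G.Adj] : Finset (Finset V) :=
  {s | ∀ u ∈ s, ∀ v ∈ s, ¬ G.Adj u v}

variable {G : SimpleGraph V} [DecidableRel G.Adj] {s : Finset V} {v : V}

lemma card_indepSets : #G.indepSets = numIndep G := by
  rw [numIndep, Nat.card_eq_fintype_card, Fintype.card_subtype]
  rfl

lemma mem_indepSets : s ∈ G.indepSets ↔ ∀ u ∈ s, ∀ w ∈ s, ¬ G.Adj u w := by
  simp [indepSets]

lemma empty_mem_indepSets : ∅ ∈ G.indepSets := by
  simp [indepSets]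

lemma erase_mem_indepSets (hs : s ∈ G.indepSets) (v : V) : s.erase v ∈ G.indepSets :=
  mem_indepSets.2 fun a ha b hb =>
    mem_indepSets.1 hs a (mem_of_mem_erase ha) b (mem_of_mem_erase hb)

lemma insert_mem_indepSets (hs : s ∈ G.indepSets) (h : s ∩ G.neighborFinset v = ∅) :
    insert v s ∈ G.indepSets := by
  have hv : ∀ a ∈ s, ¬ G.Adj v a := fun a ha hva =>
    (eq_empty_iff_forall_notMem.1 h) a (mem_inter.2 ⟨ha, (mem_neighborFinset G v a).2 hva⟩)
  rw [mem_indepSets] at hs ⊢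
  rintro a ha b hb
  rcases mem_insert.1 ha with rfl | has <;> rcases mem_insert.1 hb with rfl | hbs
  exacts [G.loopless.irrefl _, hv b hbs, fun hab => hv a has hab.symm, hs a has b hbs]

lemma notMem_of_inter_neighborFinset_ne_empty (hs : s ∈ G.indepSets)
    (h : s ∩ G.neighborFinset v ≠ ∅) : v ∉ s := fun hvs => by
  obtain ⟨u, hu⟩ := nonempty_iff_ne_empty.2 h
  rw [mem_inter, mem_neighborFinset] at hu
  exact mem_indepSets.1 hs v hvs u hu.1 hu.2

theorem condEntropy_indepSets_neighborFinset (v : V) :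
    condEntropy G.indepSets {v} (G.neighborFinset v) =
      #{s ∈ G.indepSets | s ∩ G.neighborFinset v = ∅} / #G.indepSets * log 2 := by
  set T := G.neighborFinset v
  have hterm : ∀ s ∈ G.indepSets,
      log (traceCard G.indepSets T s) - log (traceCard G.indepSets (insert v T) s) =
        if s ∩ T = ∅ then log 2 else 0 := by
    intro s hs
    have hpos : (0 : ℝ) < traceCard G.indepSets (insert v T) s := by
      exact_mod_cast traceCard_pos hs _
    split_ifs with h
    · rw [traceCard_eq_two_mul_traceCard_insert (G.notMem_neighborFinset_self v)
        (fun t ht htT => insert_mem_indepSets ht (htT.trans h))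
        (fun t ht _ => erase_mem_indepSets ht v),
        Nat.cast_mul, Nat.cast_ofNat, log_mul two_ne_zero hpos.ne', add_sub_cancel_right]
    · rw [traceCard_insert_of_forall_mem_iff fun t ht htT => ?_, sub_self]
      have hvt := notMem_of_inter_neighborFinset_ne_empty ht (htT ▸ h)
      have hvs := notMem_of_inter_neighborFinset_ne_empty hs h
      tauto
  rw [condEntropy, ← insert_eq, entropy_sub_entropy, sum_congr rfl hterm, ← sum_filter, sum_const,
    nsmul_eq_mul]
  ring

theorem mul_condEntropy_add_entropy_le (v : V) (d : ℕ) :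
    d * condEntropy G.indepSets {v} (G.neighborFinset v) + entropy G.indepSets (G.neighborFinset v)
      ≤ log (2 ^ d + 2 ^ G.degree v - 1) := by
  have h := mul_log_add_entropy_le (empty_mem_indepSets (G := G)) (G.neighborFinset v)
    (by positivity : (0 : ℝ) < 2 ^ d)
  rw [log_pow, card_neighborFinset_eq_degree] at h
  rw [condEntropy_indepSets_neighborFinset]
  linarith

end SimpleGraph

open SimpleGraph SetFamily in
theorem one_side_regular_bound_general {V : Type*} [Fintype V] [DecidableEq V]
    (G : SimpleGraph V) [DecidableRel G.Adj] (L R : Finset V)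
    (hdisj : Disjoint L R) (hunion : L ∪ R = Finset.univ)
    (hbip : ∀ u v, G.Adj u v → (u ∈ L ∧ v ∈ R) ∨ (u ∈ R ∧ v ∈ L))
    (d : ℕ) (hd : 1 ≤ d) (hreg : ∀ l ∈ L, G.degree l = d) :
    (numIndep G : ℝ) ≤ ∏ r ∈ R, ((2 : ℝ) ^ d + 2 ^ (G.degree r) - 1) ^ (1 / (d : ℝ)) := by
  set I := G.indepSets
  have hNL (v : V) (hv : v ∈ R) : G.neighborFinset v ⊆ L :=
    neighborFinset_subset_of_bipartite hdisj hbip hv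
  have hcover (u : V) (hu : u ∈ L) : d ≤ #{v ∈ R | u ∈ G.neighborFinset v} := by
    rw [filter_mem_neighborFinset_of_bipartite hdisj hbip hu, card_neighborFinset_eq_degree,
      hreg u hu]
  have hlog : (d : ℝ) * log #I ≤ ∑ r ∈ R, log ((2 : ℝ) ^ d + 2 ^ G.degree r - 1) := calc
    (d : ℝ) * log #I = d * entropy I (L ∪ R) := by rw [hunion, entropy_univ]
    _ ≤ d * entropy I L + ∑ v ∈ R, d * condEntropy I {v} (G.neighborFinset v) := by
        rw [← mul_sum, ← mul_add]
        gcongr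
        exact entropy_union_le_add_sum_condEntropy L R _ hNL
    _ ≤ ∑ v ∈ R, (d * condEntropy I {v} (G.neighborFinset v) + entropy I (G.neighborFinset v)) := by
        rw [sum_add_distrib, add_comm]
        gcongr
        exact mul_entropy_le_sum_entropy R (fun v => G.neighborFinset v) hNL hcover
    _ ≤ _ := sum_le_sum fun v _ => mul_condEntropy_add_entropy_le v d
  rw [← card_indepSets]
  refine le_prod_rpow_of_mul_log_le (mod_cast card_pos.2 ⟨∅, empty_mem_indepSets⟩) (mod_cast hd)
    (fun r _ => ?_) hlog
  linarith [one_le_pow₀ (one_le_two : (1 : ℝ) ≤ 2) (n := G.degree r),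
    pow_pos (two_pos : (0 : ℝ) < 2) d]

/-- **One-side-regular case of the main bound.** Let `G` be a finite simple bipartite
graph with parts `L` and `R`, without isolated vertices, such that every vertex of `L`
has degree exactly `d` (`d ≥ 1`). Then
`|I(G)| ≤ ∏_{r ∈ R} (2^d + 2^(d(r)) - 1)^(1/d)`. -/
theorem one_side_regular_bound {V : Type*} [Fintype V] [DecidableEq V]
    (G : SimpleGraph V) [DecidableRel G.Adj] (L R : Finset V)
    (hdisj : Disjoint L R) (hunion : L ∪ R = Finset.univ)
    (hbip : ∀ u v, G.Adj u v → (u ∈ L ∧ v ∈ R) ∨ (u ∈ R ∧ v ∈ L))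
    (hiso : ∀ v : V, 0 < G.degree v)
    (d : ℕ) (hd : 1 ≤ d) (hreg : ∀ l ∈ L, G.degree l = d) :
    (numIndep G : ℝ) ≤ ∏ r ∈ R, ((2 : ℝ) ^ d + 2 ^ (G.degree r) - 1) ^ (1 / (d : ℝ)) :=
  one_side_regular_bound_general G L R hdisj hunion hbip d hd hreg
end

section
/- Conditional entropy of vertex membership in a uniformly random independent set: Let G be a finite simple graph, let S be an independent set of G chosen uniformly at random among all independent sets of G, let r be a vertex of G with neighborhood N(r), let X_r = 1[r ∈ S] and Q_r = 1[S ∩ N(r) = ∅]. Then the conditional Shannon entropy satisfies H(X_r | Q_r) = P(S ∩ N(r) = ∅); in particular, H(X_r | Q_r = 0) = 0 and H(X_r | Q_r = 1) = 1. -/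
open Finset

/-- The conditional entropy `H(X | E)` of `X` given the event `E`: the entropy of `X`
computed with respect to the conditional probability mass function
`ω ↦ p ω / P(E)` on `E` (and `0` off `E`). -/
noncomputable def entGiven {Ω α : Type*} [Fintype Ω] [Fintype α] [DecidableEq α]
    (p : Ω → ℝ) (X : Ω → α) (E : Ω → Prop) [DecidablePred E] : ℝ :=
  ent (fun ω => if E ω then p ω / (∑ ω' ∈ Finset.univ.filter E, p ω') else 0) X

/-- The independent sets of `G`, as a subtype of `Finset V`. -/
def IndepSets {V : Type*} (G : SimpleGraph V) : Type _ :=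
  {s : Finset V // ∀ u ∈ s, ∀ v ∈ s, ¬ G.Adj u v}

instance {V : Type*} [Fintype V] [DecidableEq V] (G : SimpleGraph V) [DecidableRel G.Adj] :
    Fintype (IndepSets G) :=
  inferInstanceAs (Fintype {s : Finset V // ∀ u ∈ s, ∀ v ∈ s, ¬ G.Adj u v})

instance {V : Type*} [DecidableEq V] (G : SimpleGraph V) : DecidableEq (IndepSets G) :=
  inferInstanceAs (DecidableEq {s : Finset V // ∀ u ∈ s, ∀ v ∈ s, ¬ G.Adj u v})


section Aux

lemma card_filter_congr {α : Type*} [Fintype α] (p q : α → Prop)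
    [DecidablePred p] [DecidablePred q] (h : ∀ x, p x ↔ q x) :
    (Finset.univ.filter p).card = (Finset.univ.filter q).card :=
  congrArg Finset.card (Finset.filter_congr fun x _ => h x)

variable {V : Type*} [Fintype V] [DecidableEq V] (G : SimpleGraph V) [DecidableRel G.Adj] (r : V)

lemma IndepSets.inter_eq_empty_of_mem (s : IndepSets G) (hr : r ∈ s.1) :
    s.1 ∩ G.neighborFinset r = ∅ := by
  ext v
  simp only [Finset.mem_inter, SimpleGraph.mem_neighborFinset, Finset.notMem_empty, iff_false,
    not_and]
  exact fun hv hadj => s.2 r hr v hv hadj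

lemma IndepSets.insert_indep (s : IndepSets G) (h : s.1 ∩ G.neighborFinset r = ∅) :
    ∀ u ∈ insert r s.1, ∀ v ∈ insert r s.1, ¬ G.Adj u v := by
  have hemp : ∀ w ∈ s.1, ¬ G.Adj r w := by
    intro w hw hadj
    exact (Finset.eq_empty_iff_forall_notMem.mp h) w
      (Finset.mem_inter.mpr ⟨hw, (SimpleGraph.mem_neighborFinset G r w).mpr hadj⟩)
  intro u hu v hv hadj
  rcases Finset.mem_insert.mp hu with rfl | hu'
  · rcases Finset.mem_insert.mp hv with rfl | hv'
    · exact G.irrefl hadj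
    · exact hemp v hv' hadj
  · rcases Finset.mem_insert.mp hv with rfl | hv'
    · exact hemp u hu' hadj.symm
    · exact s.2 u hu' v hv' hadj

lemma IndepSets.card_mem_eq_card_notMem :
    (Finset.univ.filter fun s : IndepSets G =>
        s.1 ∩ G.neighborFinset r = ∅ ∧ r ∈ s.1).card =
    (Finset.univ.filter fun s : IndepSets G =>
        s.1 ∩ G.neighborFinset r = ∅ ∧ r ∉ s.1).card := by
  refine Finset.card_bij'
    (fun s _ => ⟨s.1.erase r, fun u hu v hv =>
      s.2 u (Finset.mem_of_mem_erase hu) v (Finset.mem_of_mem_erase hv)⟩)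
    (fun s hs => ⟨insert r s.1,
      IndepSets.insert_indep G r s (Finset.mem_filter.mp hs).2.1⟩) ?_ ?_ ?_ ?_
  · intro a ha
    obtain ⟨-, h1, h2⟩ := Finset.mem_filter.mp ha
    refine Finset.mem_filter.mpr ⟨Finset.mem_univ _, ?_, ?_⟩
    · exact Finset.subset_empty.mp (le_trans
        (Finset.inter_subset_inter (Finset.erase_subset r a.1) le_rfl) (le_of_eq h1))
    · exact Finset.notMem_erase r a.1
  · intro a ha
    obtain ⟨-, h1, h2⟩ := Finset.mem_filter.mp ha
    refine Finset.mem_filter.mpr ⟨Finset.mem_univ _, ?_, Finset.mem_insert_self r a.1⟩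
    have hr : r ∉ G.neighborFinset r := by
      simp [SimpleGraph.mem_neighborFinset]
    rw [Finset.insert_inter_of_notMem hr, h1]
  · intro a ha
    obtain ⟨-, h1, h2⟩ := Finset.mem_filter.mp ha
    exact Subtype.ext (Finset.insert_erase h2)
  · intro a ha
    obtain ⟨-, h1, h2⟩ := Finset.mem_filter.mp ha
    exact Subtype.ext (Finset.erase_insert h2)

lemma entGiven_false_eq_zero :
    entGiven (fun _ : IndepSets G => (Fintype.card (IndepSets G) : ℝ)⁻¹)
      (fun s => decide (r ∈ s.1))
      (fun s => decide (s.1 ∩ G.neighborFinset r = ∅) = false) = 0 := by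
  unfold entGiven ent
  rw [Fintype.sum_bool]
  set c : ℝ := (Fintype.card (IndepSets G) : ℝ)⁻¹ with hc
  set F : ℝ := ∑ ω' ∈ Finset.univ.filter
      fun s : IndepSets G => decide (s.1 ∩ G.neighborFinset r = ∅) = false, c with hF
  have htrue : (∑ ω ∈ Finset.univ.filter
      fun ω : IndepSets G => decide (r ∈ ω.1) = true,
      if decide (ω.1 ∩ G.neighborFinset r = ∅) = false then c / F else 0) = 0 := by
    apply Finset.sum_eq_zero
    intro s hs
    have hr : r ∈ s.1 := by simpa using (Finset.mem_filter.mp hs).2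
    rw [if_neg]
    simp [IndepSets.inter_eq_empty_of_mem G r s hr]
  have hfalse : (∑ ω ∈ Finset.univ.filter
      fun ω : IndepSets G => decide (r ∈ ω.1) = false,
      if decide (ω.1 ∩ G.neighborFinset r = ∅) = false then c / F else 0) = F / F := by
    rw [← Finset.sum_filter, Finset.filter_filter]
    rw [hF, ← Finset.sum_div]
    congr 1
    apply Finset.sum_congr _ (fun _ _ => rfl)
    apply Finset.filter_congr
    intro s _
    simp only [decide_eq_false_iff_not, and_iff_right_iff_imp]
    intro hne hr
    exact hne (IndepSets.inter_eq_empty_of_mem G r s hr)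
  rw [htrue, hfalse]
  rcases eq_or_ne F 0 with h | h
  · simp [h]
  · rw [div_self h]
    simp

lemma entGiven_true_eq_one :
    entGiven (fun _ : IndepSets G => (Fintype.card (IndepSets G) : ℝ)⁻¹)
      (fun s => decide (r ∈ s.1))
      (fun s => decide (s.1 ∩ G.neighborFinset r = ∅) = true) = 1 := by
  unfold entGiven ent
  rw [Fintype.sum_bool]
  set c : ℝ := (Fintype.card (IndepSets G) : ℝ)⁻¹ with hc
  have hcpos : 0 < c := by
    rw [hc]
    have : 0 < Fintype.card (IndepSets G) := Fintype.card_pos_iff.mpr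
      ⟨⟨∅, by simp⟩⟩
    positivity
  set T : ℝ := ∑ ω' ∈ Finset.univ.filter
      fun s : IndepSets G => decide (s.1 ∩ G.neighborFinset r = ∅) = true, c with hT
  set Ktt := (Finset.univ.filter fun s : IndepSets G =>
      s.1 ∩ G.neighborFinset r = ∅ ∧ r ∈ s.1).card with hKtt
  set Ktf := (Finset.univ.filter fun s : IndepSets G =>
      s.1 ∩ G.neighborFinset r = ∅ ∧ r ∉ s.1).card with hKtf
  have hKeq : Ktt = Ktf := IndepSets.card_mem_eq_card_notMem G r
  have hKttpos : 0 < Ktt := by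
    rw [hKtt]
    apply Finset.card_pos.mpr
    refine ⟨⟨{r}, ?_⟩, ?_⟩
    · intro u hu v hv
      simp only [Finset.mem_singleton] at hu hv
      subst hu; subst hv
      exact G.irrefl
    · refine Finset.mem_filter.mpr ⟨Finset.mem_univ _, ?_, by simp⟩
      ext v
      simp only [Finset.mem_inter, Finset.mem_singleton, SimpleGraph.mem_neighborFinset,
        Finset.notMem_empty, iff_false, not_and]
      rintro rfl h
      exact G.irrefl h
  have hTval : T = (Ktt + Ktf : ℕ) * c := by
    rw [hT, Finset.sum_const, nsmul_eq_mul]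
    congr 1
    rw [Nat.cast_inj, hKtt, hKtf]
    rw [← Finset.card_filter_add_card_filter_not
      (s := Finset.univ.filter fun s : IndepSets G =>
        decide (s.1 ∩ G.neighborFinset r = ∅) = true) (p := fun s => r ∈ s.1)]
    congr 1 <;> rw [Finset.filter_filter] <;>
      exact card_filter_congr _ _ (fun s => by
        constructor
        · rintro ⟨h1, h2⟩
          simp only [decide_eq_true_eq] at h1
          first
            | exact ⟨h1, h2⟩
            | exact ⟨h1, by simpa using h2⟩
        · rintro ⟨h1, h2⟩
          refine ⟨by simpa using h1, by simpa using h2⟩)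
  have htrue : (∑ ω ∈ Finset.univ.filter
      fun ω : IndepSets G => decide (r ∈ ω.1) = true,
      if decide (ω.1 ∩ G.neighborFinset r = ∅) = true then c / T else 0) = Ktt * (c / T) := by
    rw [← Finset.sum_filter, Finset.filter_filter, Finset.sum_const, nsmul_eq_mul]
    congr 2
    rw [hKtt]
    exact card_filter_congr _ _ (fun s => by
      simp only [decide_eq_true_eq]
      exact and_comm)
  have hfalse : (∑ ω ∈ Finset.univ.filter
      fun ω : IndepSets G => decide (r ∈ ω.1) = false,
      if decide (ω.1 ∩ G.neighborFinset r = ∅) = true then c / T else 0) = Ktf * (c / T) := by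
    rw [← Finset.sum_filter, Finset.filter_filter, Finset.sum_const, nsmul_eq_mul]
    congr 2
    rw [hKtf]
    exact card_filter_congr _ _ (fun s => by
      simp only [decide_eq_false_iff_not, decide_eq_true_eq]
      exact and_comm)
  rw [htrue, hfalse, ← hKeq]
  have hhalf : (Ktt : ℝ) * (c / T) = 1 / 2 := by
    rw [hTval, ← hKeq]
    have h2 : ((Ktt + Ktt : ℕ) : ℝ) = 2 * Ktt := by push_cast; ring
    rw [h2]
    have hKne : (Ktt : ℝ) ≠ 0 := Nat.cast_ne_zero.mpr hKttpos.ne'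
    field_simp
  rw [hhalf]
  have : Real.logb 2 (1 / 2) = -1 := by
    rw [one_div, Real.logb_inv, Real.logb_self_eq_one one_lt_two]
  rw [this]
  ring

end Aux

/-- **Conditional entropy of vertex membership in a uniformly random independent
set.** Let `S` be an independent set of a finite simple graph `G` chosen uniformly at
random, let `r` be a vertex with neighborhood `N(r)`, and let `X_r = 1[r ∈ S]` and
`Q_r = 1[S ∩ N(r) = ∅]`. Then `H(X_r | Q_r) = P(S ∩ N(r) = ∅)`; in particular
`H(X_r | Q_r = 0) = 0` and `H(X_r | Q_r = 1) = 1`. -/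
theorem condEntropy_indicator_uniform_indep {V : Type*} [Fintype V] [DecidableEq V]
    (G : SimpleGraph V) [DecidableRel G.Adj] (r : V) :
    let p : IndepSets G → ℝ := fun _ => (Fintype.card (IndepSets G) : ℝ)⁻¹
    let Xr : IndepSets G → Bool := fun s => decide (r ∈ s.1)
    let Qr : IndepSets G → Bool := fun s => decide (s.1 ∩ G.neighborFinset r = ∅)
    let P : Bool → ℝ := fun b => ∑ s ∈ Finset.univ.filter fun s => Qr s = b, p s
    P false * entGiven p Xr (fun s => Qr s = false) +
        P true * entGiven p Xr (fun s => Qr s = true) = P true ∧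
      entGiven p Xr (fun s => Qr s = false) = 0 ∧
      entGiven p Xr (fun s => Qr s = true) = 1 := by
  intro p Xr Qr P
  have h0 : entGiven p Xr (fun s => Qr s = false) = 0 := entGiven_false_eq_zero G r
  have h1 : entGiven p Xr (fun s => Qr s = true) = 1 := entGiven_true_eq_one G r
  refine ⟨?_, h0, h1⟩
  rw [h0, h1]
  ring
end
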